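/- arXiv:1003.0916 — 5 statements merged into one kernel-verified Lean document; each statement's English description precedes it below -/
import Mathlib

section
/- For coprime integers 1 < n < m, the coefficient of a^{2(n−1)} in the rescaled HOMFLY polynomial P_s(T_{n,m}) equals (−1)^{n−1} · q^{n(n−1)} · binom_{q²}(m−1, n−1) / [n]_{q²}, as an identity in ℚ(q). -/
/-!
Work in the field ℚ(q) of rational functions in one variable `q` over ℚ.
`qNum x j` is the q-integer `[j]_x = (1 - x^j)/(1 - x)`, `qFact x j` the q-factorial,
`qBinom x n k` the Gaussian binomial coefficient (all with base `x`, so that base `q^2`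
gives the `q²`-analogues).  `Ps n m` is the rescaled HOMFLY polynomial of the `(n,m)`
torus knot, a polynomial in the variable `a` (= `Polynomial.X`) over ℚ(q), given by
Jones' formula.
-/

noncomputable def q : RatFunc ℚ := RatFunc.X

noncomputable def qNum (x : RatFunc ℚ) (j : ℕ) : RatFunc ℚ := (1 - x ^ j) / (1 - x)

noncomputable def qFact (x : RatFunc ℚ) (j : ℕ) : RatFunc ℚ :=
  ∏ i ∈ Finset.range j, qNum x (i + 1)

noncomputable def qBinom (x : RatFunc ℚ) (n k : ℕ) : RatFunc ℚ :=
  qFact x n / (qFact x k * qFact x (n - k))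

/-- Jones' formula for the rescaled HOMFLY polynomial of the `(n,m)` torus knot,
as a polynomial in `a` (= `Polynomial.X`) over `ℚ(q)`. -/
noncomputable def Ps (n m : ℕ) : Polynomial (RatFunc ℚ) :=
  Polynomial.C ((1 - q ^ 2) / (1 - q ^ (2 * n))) *
    ∑ b ∈ Finset.range n,
      Polynomial.C (q ^ (2 * m * b)) *
        (∏ i ∈ Finset.range (n - 1 - b),
          Polynomial.C ((q ^ (2 * (i + 1)) - 1)⁻¹) *
            (Polynomial.C (q ^ (2 * (i + 1))) * Polynomial.X ^ 2 - 1)) *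
        ∏ j ∈ Finset.range b,
          Polynomial.C ((1 - q ^ (2 * (j + 1)))⁻¹) *
            (Polynomial.X ^ 2 - Polynomial.C (q ^ (2 * (j + 1))))


/-!
Put `t = q²` and `(t;t)_k = ∏_{i<k} (1 - t^{i+1})`. Only the top coefficients of the `n - 1`
quadratic factors contribute to `a^{2(n-1)}`, so the `b`-th summand contributes
`t^{mb} (-1)^{n-1-b} t^{C(n-b,2)} / ((t;t)_{n-1-b} (t;t)_b)`.
Since `(t;t)_{n-1} / ((t;t)_b (t;t)_{n-1-b})` is the Gaussian binomial `[n-1, b]_t`, the sum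
over `b` is the `q`-binomial theorem `∏_{k<N} (1 + z t^k) = ∑_b [N, b]_t t^{C(b,2)} z^b`
at `N = n - 1`, `z = -t^{m-n+1}`, and the resulting product `∏_{k<n-1} (1 - t^{m-n+1+k})`
is `(t;t)_{m-1} / (t;t)_{m-n}`.
-/

open Finset Polynomial

section CommRing

variable {R : Type*} [CommRing R]

def qPochhammer (t : R) (k : ℕ) : R := ∏ i ∈ range k, (1 - t ^ (i + 1))

def gaussBinomial (t : R) : ℕ → ℕ → R
  | _, 0 => 1
  | 0, _ + 1 => 0
  | N + 1, b + 1 => gaussBinomial t N b + t ^ (b + 1) * gaussBinomial t N (b + 1)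

@[simp]
lemma gaussBinomial_zero_right (t : R) (N : ℕ) : gaussBinomial t N 0 = 1 := by
  cases N <;> rfl

lemma gaussBinomial_succ_succ (t : R) (N b : ℕ) :
    gaussBinomial t (N + 1) (b + 1) =
      gaussBinomial t N b + t ^ (b + 1) * gaussBinomial t N (b + 1) :=
  rfl

lemma gaussBinomial_eq_zero_of_lt (t : R) {N b : ℕ} (h : N < b) : gaussBinomial t N b = 0 := by
  induction N generalizing b with
  | zero => cases b with | zero => omega | succ b => rfl
  | succ N ih =>
    cases b with
    | zero => omega
    | succ b =>
      rw [gaussBinomial_succ_succ, ih (b := b) (by omega), ih (b := b + 1) (by omega), mul_zero,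
        add_zero]

lemma gaussBinomial_self (t : R) (N : ℕ) : gaussBinomial t N N = 1 := by
  induction N with
  | zero => rfl
  | succ N ih =>
    rw [gaussBinomial_succ_succ, ih, gaussBinomial_eq_zero_of_lt t N.lt_succ_self, mul_zero,
      add_zero]

lemma qPochhammer_succ (t : R) (k : ℕ) :
    qPochhammer t (k + 1) = qPochhammer t k * (1 - t ^ (k + 1)) :=
  prod_range_succ _ _

lemma qPochhammer_add (t : R) (a b : ℕ) :
    qPochhammer t (a + b) = qPochhammer t a * ∏ k ∈ range b, (1 - t ^ (a + k + 1)) := by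
  rw [qPochhammer, qPochhammer, prod_range_add]

lemma gaussBinomial_mul_qPochhammer (t : R) (b c : ℕ) :
    gaussBinomial t (b + c) b * qPochhammer t b * qPochhammer t c = qPochhammer t (b + c) := by
  induction b generalizing c with
  | zero => simp [qPochhammer]
  | succ b ihb =>
    induction c with
    | zero => simp [gaussBinomial_self, qPochhammer]
    | succ c ihc =>
      have h₁ := ihb (c + 1)
      have h₂ : gaussBinomial t (b + (c + 1)) (b + 1) * qPochhammer t (b + 1) * qPochhammer t c
          = qPochhammer t (b + (c + 1)) := by
        rw [← add_assoc, ← add_right_comm]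
        exact ihc
      rw [qPochhammer_succ t c] at h₁
      rw [qPochhammer_succ t b] at h₂
      rw [show b + 1 + (c + 1) = b + (c + 1) + 1 by omega, gaussBinomial_succ_succ,
        qPochhammer_succ t b, qPochhammer_succ t c, qPochhammer_succ t (b + (c + 1))]
      linear_combination (1 - t ^ (b + 1)) * h₁ + t ^ (b + 1) * (1 - t ^ (c + 1)) * h₂

theorem prod_one_add_mul_pow_eq_sum_gaussBinomial (t z : R) (N : ℕ) :
    ∏ k ∈ range N, (1 + z * t ^ k) =
      ∑ b ∈ range (N + 1), gaussBinomial t N b * t ^ b.choose 2 * z ^ b := by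
  induction N generalizing z with
  | zero => simp
  | succ N ih =>
    -- peel off the factor `1 + z` and expand the rest with `z * t` in place of `z`
    set Y : ℕ → R := fun b => gaussBinomial t N b * t ^ (b + 1).choose 2 * z ^ b
    have hY : ∏ k ∈ range N, (1 + z * t ^ (k + 1)) = ∑ b ∈ range (N + 1), Y b := by
      simp_rw [pow_succ t, ← mul_assoc, ← mul_right_comm z, ih, Y, Nat.choose_succ_succ',
        Nat.choose_one_right]
      exact sum_congr rfl fun b _ => by ring
    have hshift : ∑ b ∈ range (N + 1), Y (b + 1) = ∑ b ∈ range (N + 1), Y b - 1 := by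
      rw [sum_range_succ, sum_range_succ' Y]
      simp [Y, gaussBinomial_eq_zero_of_lt]
    have h₁ : ∑ b ∈ range (N + 1), gaussBinomial t N b * t ^ (b + 1).choose 2 * z ^ (b + 1) =
        z * ∑ b ∈ range (N + 1), Y b := by
      rw [mul_sum]
      exact sum_congr rfl fun b _ => by ring
    have h₂ : ∑ b ∈ range (N + 1),
        t ^ (b + 1) * gaussBinomial t N (b + 1) * t ^ (b + 1).choose 2 * z ^ (b + 1) =
        ∑ b ∈ range (N + 1), Y (b + 1) := by
      refine sum_congr rfl fun b _ => ?_
      simp only [Y, Nat.choose_succ_succ' (b + 1), Nat.choose_one_right]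
      ring
    rw [prod_range_succ', hY, pow_zero, mul_one,
      sum_range_succ' (fun b => gaussBinomial t (N + 1) b * t ^ b.choose 2 * z ^ b)]
    simp only [gaussBinomial_succ_succ, add_mul, sum_add_distrib, gaussBinomial_zero_right]
    rw [h₁, h₂, hshift, Nat.choose_zero_succ, pow_zero, pow_zero, mul_one, mul_one]
    ring

lemma coeff_prod_mul_prod_of_natDegree_le {ι κ : Type*} (s : Finset ι) (s' : Finset κ)
    (f : ι → R[X]) (g : κ → R[X]) {d : ℕ} (hf : ∀ i ∈ s, (f i).natDegree ≤ d)
    (hg : ∀ j ∈ s', (g j).natDegree ≤ d) :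
    ((∏ i ∈ s, f i) * ∏ j ∈ s', g j).coeff ((#s + #s') * d) =
      (∏ i ∈ s, (f i).coeff d) * ∏ j ∈ s', (g j).coeff d := by
  have hf' : (∏ i ∈ s, f i).natDegree ≤ #s * d :=
    (natDegree_prod_le s f).trans (sum_le_card_nsmul s _ d hf)
  have hg' : (∏ j ∈ s', g j).natDegree ≤ #s' * d :=
    (natDegree_prod_le s' g).trans (sum_le_card_nsmul s' _ d hg)
  rw [add_mul, coeff_mul_add_eq_of_natDegree_le hf' hg', coeff_prod_of_natDegree_le s f d hf,
    coeff_prod_of_natDegree_le s' g d hg]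

end CommRing

lemma add_mul_add_choose_two (b c D : ℕ) :
    (b + c + 1 + D) * b + (c + 1).choose 2 =
      (b + c + 1).choose 2 + b.choose 2 + (D + 1) * b := by
  qify
  simp only [Nat.cast_choose_two]
  push_cast
  ring

section Field

variable {K : Type*} [Field K] {t : K}

lemma qPochhammer_ne_zero (ht : ∀ k, t ^ (k + 1) ≠ 1) (k : ℕ) : qPochhammer t k ≠ 0 :=
  prod_ne_zero_iff.mpr fun i _ => sub_ne_zero.mpr (ht i).symm

lemma gaussBinomial_eq_div (ht : ∀ k, t ^ (k + 1) ≠ 1) (b c : ℕ) :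
    gaussBinomial t (b + c) b = qPochhammer t (b + c) / (qPochhammer t b * qPochhammer t c) := by
  rw [← gaussBinomial_mul_qPochhammer, mul_assoc,
    mul_div_cancel_right₀ _ (mul_ne_zero (qPochhammer_ne_zero ht b) (qPochhammer_ne_zero ht c))]

lemma prod_range_pow_succ (t : K) (k : ℕ) :
    ∏ i ∈ range k, t ^ (i + 1) = t ^ (k + 1).choose 2 := by
  induction k with
  | zero => simp
  | succ k ih =>
    rw [prod_range_succ, ih, ← pow_add, Nat.choose_succ_succ' (k + 1), Nat.choose_one_right,
      add_comm]

lemma prod_range_inv_pow_succ_sub_one_mul (t : K) (k : ℕ) :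
    ∏ i ∈ range k, (t ^ (i + 1) - 1)⁻¹ * t ^ (i + 1) =
      (-1) ^ k * t ^ (k + 1).choose 2 / qPochhammer t k := by
  have h : ∏ i ∈ range k, (t ^ (i + 1) - 1) = (-1) ^ k * qPochhammer t k :=
    calc ∏ i ∈ range k, (t ^ (i + 1) - 1) = ∏ i ∈ range k, -1 * (1 - t ^ (i + 1)) :=
          prod_congr rfl fun _ _ => by ring
      _ = (-1) ^ k * qPochhammer t k := by rw [prod_mul_distrib, prod_const, card_range]; rfl
  rw [prod_mul_distrib, prod_inv_distrib, h, prod_range_pow_succ, mul_inv, ← inv_pow,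
    inv_neg_one]
  ring

theorem sum_top_coeff_eq (ht : ∀ k, t ^ (k + 1) ≠ 1) (N D : ℕ) :
    ∑ b ∈ range (N + 1), t ^ ((N + 1 + D) * b) *
        ((-1) ^ (N - b) * t ^ (N - b + 1).choose 2 / qPochhammer t (N - b)) *
        (qPochhammer t b)⁻¹ =
      (-1) ^ N * t ^ (N + 1).choose 2 *
        (qPochhammer t (N + D) / (qPochhammer t N * qPochhammer t D)) := by
  have hP := qPochhammer_ne_zero ht
  have hterm : ∀ b ∈ range (N + 1), t ^ ((N + 1 + D) * b) *
        ((-1) ^ (N - b) * t ^ (N - b + 1).choose 2 / qPochhammer t (N - b)) *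
        (qPochhammer t b)⁻¹ =
      (-1) ^ N * t ^ (N + 1).choose 2 / qPochhammer t N *
        (gaussBinomial t N b * t ^ b.choose 2 * (-t ^ (D + 1)) ^ b) := by
    intro b hb
    obtain ⟨c, rfl⟩ : ∃ c, N = b + c := ⟨N - b, by have := mem_range.mp hb; omega⟩
    have hexp : t ^ ((b + c + 1 + D) * b) * t ^ (c + 1).choose 2 =
        t ^ (b + c + 1).choose 2 * t ^ b.choose 2 * (t ^ (D + 1)) ^ b := by
      rw [← pow_add, ← pow_mul, ← pow_add, ← pow_add, add_mul_add_choose_two]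
    have hsign : (-1 : K) ^ b * (-1) ^ b = 1 := by
      rw [← mul_pow, neg_one_mul, neg_neg, one_pow]
    rw [Nat.add_sub_cancel_left, gaussBinomial_eq_div ht, pow_add (-1 : K),
      neg_pow (t ^ (D + 1))]
    field_simp [hP]
    linear_combination
      hexp - t ^ (b + c + 1).choose 2 * t ^ b.choose 2 * (t ^ (D + 1)) ^ b * hsign
  have hprod :
      ∏ k ∈ range N, (1 + -t ^ (D + 1) * t ^ k) = ∏ k ∈ range N, (1 - t ^ (D + k + 1)) :=
    prod_congr rfl fun k _ => by ring
  rw [sum_congr rfl hterm, ← mul_sum, ← prod_one_add_mul_pow_eq_sum_gaussBinomial, hprod,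
    add_comm N D, qPochhammer_add t D N]
  field_simp [hP]

noncomputable def jonesTorus (t : K) (n m : ℕ) : K[X] :=
  C ((1 - t) / (1 - t ^ n)) *
    ∑ b ∈ range n, C (t ^ (m * b)) *
      (∏ i ∈ range (n - 1 - b), C ((t ^ (i + 1) - 1)⁻¹) * (C (t ^ (i + 1)) * X ^ 2 - 1)) *
      ∏ j ∈ range b, C ((1 - t ^ (j + 1))⁻¹) * (X ^ 2 - C (t ^ (j + 1)))

lemma coeff_jonesTorus_summand (t : K) (m N b : ℕ) (hb : b ≤ N) :
    (C (t ^ (m * b)) *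
        (∏ i ∈ range (N - b), C ((t ^ (i + 1) - 1)⁻¹) * (C (t ^ (i + 1)) * X ^ 2 - 1)) *
        ∏ j ∈ range b, C ((1 - t ^ (j + 1))⁻¹) * (X ^ 2 - C (t ^ (j + 1)))).coeff (2 * N) =
      t ^ (m * b) * (∏ i ∈ range (N - b), (t ^ (i + 1) - 1)⁻¹ * t ^ (i + 1)) *
        ∏ j ∈ range b, (1 - t ^ (j + 1))⁻¹ := by
  rw [mul_assoc, coeff_C_mul, show 2 * N = (#(range (N - b)) + #(range b)) * 2 by simp; omega,
    coeff_prod_mul_prod_of_natDegree_le _ _ _ _ (fun _ _ => by compute_degree)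
      (fun _ _ => by compute_degree)]
  simp only [coeff_C_mul, coeff_sub, coeff_X_pow, coeff_one, coeff_C]
  simp [mul_assoc]

theorem coeff_jonesTorus_top (ht : ∀ k, t ^ (k + 1) ≠ 1) (N D : ℕ) :
    (jonesTorus t (N + 1) (N + 1 + D)).coeff (2 * N) =
      (1 - t) / (1 - t ^ (N + 1)) * ((-1) ^ N * t ^ (N + 1).choose 2 *
        (qPochhammer t (N + D) / (qPochhammer t N * qPochhammer t D))) := by
  rw [jonesTorus, coeff_C_mul, finsetSum_coeff, ← sum_top_coeff_eq ht, Nat.add_sub_cancel]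
  congr 1
  refine sum_congr rfl fun b hb => ?_
  rw [coeff_jonesTorus_summand t _ N b (Nat.lt_succ_iff.mp (mem_range.mp hb)),
    prod_range_inv_pow_succ_sub_one_mul, prod_inv_distrib]
  rfl

end Field

lemma Ps_eq_jonesTorus (n m : ℕ) : Ps n m = jonesTorus (q ^ 2) n m := by
  simp only [Ps, jonesTorus, pow_mul]

lemma q_pow_ne_one {k : ℕ} (hk : k ≠ 0) : q ^ k ≠ 1 := by
  intro h
  have hX : (X ^ k : ℚ[X]) = 1 :=
    IsFractionRing.injective ℚ[X] (RatFunc ℚ) (by simpa [q, RatFunc.algebraMap_X] using h)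
  simpa [hk] using congrArg natDegree hX

lemma qFact_eq_qPochhammer_div (x : RatFunc ℚ) (j : ℕ) :
    qFact x j = qPochhammer x j / (1 - x) ^ j := by
  simp only [qFact, qNum, qPochhammer, prod_div_distrib, prod_const, card_range]

lemma qBinom_add_left_eq {x : RatFunc ℚ} (hx : x ≠ 1) (N D : ℕ) :
    qBinom x (N + D) N = qPochhammer x (N + D) / (qPochhammer x N * qPochhammer x D) := by
  have hx' : 1 - x ≠ 0 := sub_ne_zero.mpr hx.symm
  rw [qBinom, Nat.add_sub_cancel_left, qFact_eq_qPochhammer_div, qFact_eq_qPochhammer_div,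
    qFact_eq_qPochhammer_div, pow_add]
  field_simp

theorem coeff_Ps_top_general (n m : ℕ) (hn : 1 < n) (hm : n < m) :
    (Ps n m).coeff (2 * (n - 1)) =
      (-1) ^ (n - 1) * q ^ (n * (n - 1)) * qBinom (q ^ 2) (m - 1) (n - 1) /
        qNum (q ^ 2) n := by
  obtain ⟨N, rfl⟩ : ∃ N, n = N + 1 := ⟨n - 1, by omega⟩
  obtain ⟨D, rfl⟩ : ∃ D, m = N + 1 + D := ⟨m - (N + 1), by omega⟩
  have ht : ∀ k, (q ^ 2) ^ (k + 1) ≠ 1 := fun k => by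
    rw [← pow_mul]
    exact q_pow_ne_one (by omega)
  have hexp : q ^ ((N + 1) * N) = (q ^ 2) ^ (N + 1).choose 2 := by
    rw [← pow_mul]
    congr 1
    simpa [mul_comm] using Nat.add_one_mul_choose_eq N 1
  rw [Ps_eq_jonesTorus, Nat.add_sub_cancel, show N + 1 + D - 1 = N + D by omega,
    coeff_jonesTorus_top ht, qBinom_add_left_eq (by simpa using ht 0), qNum, hexp,
    div_div_eq_mul_div]
  ring

/-- For coprime `1 < n < m`, the coefficient of `a^{2(n-1)}` (the top term) of the
rescaled HOMFLY polynomial of the `(n,m)` torus knot equals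
`(-1)^{n-1} q^{n(n-1)} binom_{q²}(m-1, n-1) / [n]_{q²}`. -/
theorem coeff_Ps_top (n m : ℕ) (hn : 1 < n) (hm : n < m) (hco : Nat.Coprime n m) :
    (Ps n m).coeff (2 * (n - 1)) =
      (-1) ^ (n - 1) * q ^ (n * (n - 1)) * qBinom (q ^ 2) (m - 1) (n - 1) /
        qNum (q ^ 2) n :=
  coeff_Ps_top_general n m hn hm
end

section
/- For integers m, n ≥ 1 and k ≥ 0, the number of lattice paths from (0,0) to (m,n) whose first step is N, whose last step is E, and which have exactly k external corners, equals C(m−1, k) · C(n−1, k), where C denotes the ordinary binomial coefficient. -/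
/-!
A lattice path from `(0,0)` to `(m,n)` is encoded by the set `S ⊆ {0, …, m+n-1}` of
(0-indexed) positions of its `E`-steps, with `S.card = m`; positions not in `S` carry
`N`-steps.  An external corner of the path is an index `i` with `0 ≤ i ≤ m+n-2` such
that step `i` is `E` and step `i+1` is `N` (this is the set of 1-indexed indices from
the informal statement, shifted down by one).
-/

/-- The set of external corners of the lattice path encoded by `S` in the `m × n`
rectangle. -/
def corners (m n : ℕ) (S : Finset ℕ) : Finset ℕ :=
  (Finset.range (m + n - 1)).filter fun i => i ∈ S ∧ (i + 1) ∉ S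

/-!
Deleting the forced first step `N` and last step `E` leaves an arbitrary lattice path to
`(m - 1, n - 1)` with the same external corners, so it suffices to show that `C(m,k) C(n,k)`
paths to `(m, n)` have `k` external corners. Sorting the paths to `(m + 1, n + 1)` by their last
step and, when it is `N`, by the step before it (an `N` appended after an `E` creates a corner)
gives, for the number `c(m, n, k)` of paths to `(m, n)` with `k` corners,
`c(m+1, n+1, k) + c(m, n, k) = c(m, n+1, k) + c(m+1, n, k) + c(m, n, k-1)`
(the last term absent for `k = 0`), which `C(m,k) C(n,k)` satisfies by Pascal's rule.
-/

open Finset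

theorem sum_powersetCard_range_add_one {M : Type*} [AddCommMonoid M] (g : Finset ℕ → M)
    (m L : ℕ) :
    ∑ S ∈ powersetCard (m + 1) (range (L + 1)), g S =
      ∑ S ∈ powersetCard (m + 1) (range L), g S +
        ∑ S ∈ powersetCard m (range L), g (insert L S) := by
  have hL : ∀ S ∈ powersetCard m (range L), L ∉ S := fun S hS hL =>
    notMem_range_self ((mem_powersetCard.1 hS).1 hL)
  rw [range_add_one, powersetCard_succ_insert notMem_range_self, sum_union, sum_image]
  · intro S hS T hT h
    rw [← erase_insert (hL S hS), h, erase_insert (hL T hT)]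
  · refine disjoint_left.2 fun S hS hS' => ?_
    obtain ⟨T, -, rfl⟩ := mem_image.1 hS'
    exact notMem_range_self ((mem_powersetCard.1 hS).1 (mem_insert_self L T))

theorem corners_insert_of_subset_range {m n : ℕ} {S : Finset ℕ} (hS : S ⊆ range (m + n)) :
    corners (m + 1) n (insert (m + n) S) = corners m n S := by
  ext i
  have hi := @hS i
  have hi' := @hS (i + 1)
  simp only [corners, mem_filter, mem_range, mem_insert] at hi hi' ⊢
  by_cases i ∈ S <;> by_cases i + 1 ∈ S <;> simp_all <;> omega

theorem card_corners_add_one_right {m n : ℕ} {S : Finset ℕ} (hS : S ⊆ range (m + n)) :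
    #(corners m (n + 1) S) = #(corners m n S) + if m + n - 1 ∈ S then 1 else 0 := by
  rcases Nat.eq_zero_or_pos (m + n) with h | h
  · simp [corners, h, subset_empty.1 (h ▸ hS)]
  have hrange : range (m + (n + 1) - 1) = insert (m + n - 1) (range (m + n - 1)) := by
    rw [← range_add_one]; congr 1; omega
  have hlast : m + n - 1 + 1 ∉ S := fun h' => by
    have := mem_range.1 (hS h'); omega
  rw [corners, hrange, filter_insert]
  split_ifs with h1 h2 h2
  · rw [card_insert_of_notMem (by simp)]; rfl
  · exact absurd h1.1 h2
  · exact absurd ⟨h2, hlast⟩ h1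
  · rfl

theorem corners_map_addRightEmbedding (m n : ℕ) (S : Finset ℕ) :
    corners m (n + 1) (S.map (addRightEmbedding 1)) =
      (corners m n S).map (addRightEmbedding 1) := by
  ext (_ | i)
  · simp [corners]
  · simp [corners]; omega

def cornerSum {M : Type*} [AddCommMonoid M] (φ : ℕ → M) (m n : ℕ) : M :=
  ∑ S ∈ powersetCard m (range (m + n)), φ #(corners m n S)

section cornerSum

variable {M : Type*} [AddCommMonoid M] (φ : ℕ → M)

theorem cornerSum_zero_left (n : ℕ) : cornerSum φ 0 n = φ 0 := by
  simp [cornerSum, corners]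

theorem cornerSum_zero_right (m : ℕ) : cornerSum φ m 0 = φ 0 := by
  have hcorners : corners m 0 (range m) = ∅ := by
    ext i; simp [corners]; omega
  have hpaths : powersetCard m (range m) = {range m} := by
    simpa using powersetCard_self (range m)
  rw [cornerSum, add_zero, hpaths, sum_singleton, hcorners, card_empty]

theorem cornerSum_add_one_add_one (m n : ℕ) :
    cornerSum φ (m + 1) (n + 1) + cornerSum φ m n =
      cornerSum φ m (n + 1) + cornerSum φ (m + 1) n + cornerSum (fun c => φ (c + 1)) m n := by
  have hsub : ∀ {l L : ℕ} {S : Finset ℕ}, S ∈ powersetCard l (range L) → S ⊆ range L :=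
    fun hS => (mem_powersetCard.1 hS).1
  -- paths to `(m + 1, n)` whose last step is `N`
  set X := ∑ S ∈ powersetCard (m + 1) (range (m + n)), φ #(corners (m + 1) n S)
  have hE : cornerSum φ (m + 1) n = X + cornerSum φ m n := by
    rw [cornerSum, add_right_comm, sum_powersetCard_range_add_one]
    refine congrArg (X + ·) (sum_congr rfl fun S hS => ?_)
    rw [corners_insert_of_subset_range (hsub hS)]
  have hN : ∑ S ∈ powersetCard (m + 1) (range (m + n + 1)),
      φ (#(corners (m + 1) n S) + if m + n ∈ S then 1 else 0) =
      X + cornerSum (fun c => φ (c + 1)) m n := by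
    rw [sum_powersetCard_range_add_one]
    congr 1
    · refine sum_congr rfl fun S hS => ?_
      rw [if_neg fun h => notMem_range_self (hsub hS h), add_zero]
    · refine sum_congr rfl fun S hS => ?_
      rw [corners_insert_of_subset_range (hsub hS), if_pos (mem_insert_self _ _)]
  have hall : cornerSum φ (m + 1) (n + 1) =
      ∑ S ∈ powersetCard (m + 1) (range (m + n + 1)),
        φ (#(corners (m + 1) n S) + if m + n ∈ S then 1 else 0) + cornerSum φ m (n + 1) := by
    rw [cornerSum, show m + 1 + (n + 1) = m + n + 1 + 1 by omega,
      sum_powersetCard_range_add_one]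
    congr 1
    · refine sum_congr rfl fun S hS => ?_
      rw [card_corners_add_one_right (by simpa [add_right_comm] using hsub hS),
        show m + 1 + n - 1 = m + n by omega]
    · refine sum_congr rfl fun S hS => ?_
      rw [← corners_insert_of_subset_range (hsub hS)]
      rfl
  rw [hall, hN, hE]
  abel

end cornerSum

theorem cornerSum_ite_eq (m n k : ℕ) :
    cornerSum (fun c => if c = k then 1 else 0) m n = m.choose k * n.choose k := by
  induction m generalizing n k with
  | zero => cases k <;> simp [cornerSum_zero_left]
  | succ m ihm =>
    induction n generalizing k with
    | zero => cases k <;> simp [cornerSum_zero_right]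
    | succ n ihn =>
      have h := cornerSum_add_one_add_one (fun c => if c = k then 1 else 0) m n
      rw [ihm, ihm, ihn] at h
      cases k with
      | zero =>
        have hzero : cornerSum (fun _ => 0) m n = 0 := sum_const_zero
        simpa [hzero] using h
      | succ k =>
        simp only [add_left_inj, ihm] at h
        simp only [Nat.choose_succ_succ] at h ⊢
        linarith

theorem card_filter_powerset_range_add_one_zero_notMem (L m : ℕ) (p : Finset ℕ → Prop)
    [DecidablePred p] :
    #{S ∈ (range (L + 1)).powerset | #S = m ∧ 0 ∉ S ∧ p S} =
      #{S ∈ powersetCard m (range L) | p (S.map (addRightEmbedding 1))} := by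
  have hfirstN : {S ∈ (range (L + 1)).powerset | #S = m ∧ 0 ∉ S} =
      powersetCard m ((range L).map (addRightEmbedding 1)) := by
    ext S
    rw [range_add_one', mem_filter, mem_powerset, mem_powersetCard]
    constructor
    · rintro ⟨hS, hcard, h0⟩
      exact ⟨(subset_insert_iff_of_notMem h0).1 hS, hcard⟩
    · rintro ⟨hS, hcard⟩
      exact ⟨hS.trans (subset_insert _ _), hcard, fun h0 => by simpa using hS h0⟩
  calc #{S ∈ (range (L + 1)).powerset | #S = m ∧ 0 ∉ S ∧ p S}
      _ = #{S ∈ powersetCard m ((range L).map (addRightEmbedding 1)) | p S} := by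
        rw [← hfirstN, filter_filter]
        simp only [and_assoc]
      _ = #{S ∈ powersetCard m (range L) | p (S.map (addRightEmbedding 1))} := by
        rw [powersetCard_map, filter_map, card_map]
        rfl

theorem card_filter_last_mem_eq_cornerSum (m n k : ℕ) :
    #{S ∈ powersetCard (m + 1) (range (m + n + 1)) | m + n ∈ S ∧ #(corners (m + 1) n S) = k} =
      cornerSum (fun c => if c = k then 1 else 0) m n := by
  rw [card_filter, sum_powersetCard_range_add_one, cornerSum, sum_eq_zero, zero_add]
  · refine sum_congr rfl fun S hS => ?_
    rw [corners_insert_of_subset_range (mem_powersetCard.1 hS).1]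
    simp
  · exact fun S hS => if_neg fun h => notMem_range_self ((mem_powersetCard.1 hS).1 h.1)

/-- The number of lattice paths from `(0,0)` to `(m,n)` whose first step is `N`, whose
last step is `E`, and which have exactly `k` external corners is
`C(m-1,k) · C(n-1,k)`. -/
theorem card_paths_first_N_last_E (m n k : ℕ) (hm : 1 ≤ m) (hn : 1 ≤ n) :
    (((Finset.range (m + n)).powerset.filter fun S =>
        S.card = m ∧ 0 ∉ S ∧ m + n - 1 ∈ S ∧ (corners m n S).card = k).card) =
      (m - 1).choose k * (n - 1).choose k := by
  obtain ⟨a, rfl⟩ : ∃ a, m = a + 1 := ⟨m - 1, by omega⟩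
  obtain ⟨b, rfl⟩ : ∃ b, n = b + 1 := ⟨n - 1, by omega⟩
  rw [show a + 1 + (b + 1) = a + 1 + b + 1 by omega,
    card_filter_powerset_range_add_one_zero_notMem]
  simp only [corners_map_addRightEmbedding, card_map, add_tsub_cancel_right, add_right_comm a 1 b,
    mem_map, addRightEmbedding_apply, add_left_inj, exists_eq_right]
  rw [card_filter_last_mem_eq_cornerSum, cornerSum_ite_eq]
end

section
/- Let m, n ≥ 1 be coprime integers and k ≥ 0. The number of Dyck paths in the m×n rectangle having exactly k external corners equals N_k = (1/(k+1)) · C(m−1, k) · C(n−1, k), where C denotes the ordinary binomial coefficient. -/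
/-- The path encoded by `S` is a Dyck path in the `m × n` rectangle: it stays weakly
above the diagonal, i.e. every prefix (of length `j`) with `a` E-steps and `b = j - a`
N-steps satisfies `b·m ≥ a·n`. -/
def IsDyck (m n : ℕ) (S : Finset ℕ) : Prop :=
  ∀ j ∈ Finset.range (m + n + 1),
    (S ∩ Finset.range j).card * n ≤ (j - (S ∩ Finset.range j).card) * m

instance (m n : ℕ) : DecidablePred (IsDyck m n) := fun _ => by
  unfold IsDyck; infer_instance

/-!
A Dyck path with `k` corners starts with `N` and ends with `E`, so it is
`N^(c 0) E^(d 0) ⋯ N^(c k) E^(d k)` for compositions `c` of `n` and `d` of `m` into `k + 1`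
positive parts, and there are `C(n-1,k) C(m-1,k)` such pairs. The map from pairs to paths is
injective, since the corners determine the run boundaries; summing over `k`, both sides have
`C(m+n-2, m-1)` elements (Vandermonde), so it is a bijection onto the paths with first step `N`,
last step `E` and `k` corners.

Such a path is Dyck iff the height `m (c 0 + ⋯ + c (t-1)) - n (d 0 + ⋯ + d (t-1))` is
nonnegative for every `t`. Rotating `(c, d)` cyclically shifts this height sequence, which is
periodic; since `m` and `n` are coprime its values over one period are distinct, so exactly one
of the `k + 1` rotations starts at the minimum. Hence `(k + 1) N_k = C(m-1,k) C(n-1,k)`.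
-/

open Finset Fin.NatCast

lemma exists_le_and_le_succ {α : Type*} [LinearOrder α] (g : ℕ → α) {k : ℕ} {j : α}
    (h0 : g 0 ≤ j) (hj : j ≤ g (k + 1)) : ∃ t ≤ k, g t ≤ j ∧ j ≤ g (t + 1) := by
  induction k with
  | zero => exact ⟨0, le_rfl, h0, hj⟩
  | succ k ih =>
    by_cases hk : j ≤ g (k + 1)
    · obtain ⟨t, ht, h⟩ := ih hk
      exact ⟨t, by omega, h⟩
    · exact ⟨k + 1, le_rfl, (not_le.1 hk).le, hj⟩

lemma StrictMono.eq_of_image_range_eq {α : Type*} [LinearOrder α] {f g : ℕ → α}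
    (hf : StrictMono f) (hg : StrictMono g) {k : ℕ} (h : (range k).image f = (range k).image g)
    {t : ℕ} (ht : t < k) : f t = g t := by
  have key : (fun s : Fin k => f s) = fun s : Fin k => g s := by
    refine ((hf.comp Fin.val_strictMono).range_inj (hg.comp Fin.val_strictMono)).1 ?_
    ext y
    simpa [Fin.exists_iff] using congrArg (y ∈ ·) h
  exact congrFun key ⟨t, ht⟩

lemma Nat.sum_range_choose_mul_choose (a b : ℕ) {K : ℕ} (hK : a < K) :
    ∑ i ∈ range K, a.choose i * b.choose i = (a + b).choose a := by
  rw [← sum_subset (range_subset_range.2 hK) fun i _ hi => by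
      rw [Nat.choose_eq_zero_of_lt (by simp at hi; omega), zero_mul],
    add_comm a b, Nat.add_choose_eq, Nat.sum_antidiagonal_eq_sum_range_succ_mk]
  refine sum_congr rfl fun i hi => ?_
  rw [Nat.choose_symm (by simp at hi; omega), mul_comm]

lemma Finset.card_piAntidiag_univ_fin (k j : ℕ) :
    #(piAntidiag (univ : Finset (Fin k)) j) = (k + j - 1).choose j := by
  rw [card_eq_of_equiv_fintype ((Equiv.subtypeEquivRight fun P => by simp).trans
    (Sym.equivNatSumOfFintype (Fin k) j).symm), Sym.card_sym_eq_choose, Fintype.card_fin]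

lemma Function.Periodic.forall_le_iff {α : Type*} [Preorder α] {F : ℕ → α} {p j : ℕ}
    (hF : Function.Periodic F p) (hj : j < p) :
    (∀ i, F j ≤ F i) ↔ ∀ t ≤ p, F j ≤ F (j + t) := by
  refine ⟨fun h t _ => h _, fun h i => ?_⟩
  rw [← hF.map_mod_nat i]
  have := Nat.mod_lt i (by omega : 0 < p)
  rcases le_or_gt j (i % p) with hji | hji
  · simpa [Nat.add_sub_cancel' hji] using h (i % p - j) (by omega)
  · rw [← hF (i % p)]
    simpa [show j + (i % p + p - j) = i % p + p by omega] using h (i % p + p - j) (by omega)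

lemma Function.Periodic.existsUnique_forall_le {α : Type*} [LinearOrder α] {F : ℕ → α}
    {p : ℕ} (hp : 0 < p) (hF : Function.Periodic F p) (hinj : Set.InjOn F (Set.Iio p)) :
    ∃! j, j < p ∧ ∀ i, F j ≤ F i := by
  obtain ⟨j, hj, hmin⟩ := exists_min_image (range p) F ⟨0, mem_range.2 hp⟩
  refine ⟨j, ⟨mem_range.1 hj, fun i => ?_⟩, fun j' ⟨hj', hmin'⟩ =>
    hinj hj' (mem_range.1 hj) (le_antisymm (hmin' j) (hmin j' (mem_range.2 hj')))⟩
  rw [← hF.map_mod_nat i]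
  exact hmin _ (mem_range.2 (Nat.mod_lt _ hp))

namespace RationalDyck

def partialSum (c : ℕ → ℕ) (t : ℕ) : ℕ := ∑ i ∈ range t, c i

@[simp] lemma partialSum_zero (c : ℕ → ℕ) : partialSum c 0 = 0 := rfl

lemma partialSum_succ (c : ℕ → ℕ) (t : ℕ) : partialSum c (t + 1) = partialSum c t + c t :=
  sum_range_succ c t

lemma partialSum_add (c : ℕ → ℕ) (s t : ℕ) :
    partialSum c (s + t) = partialSum c s + partialSum (fun i => c (s + i)) t :=
  sum_range_add c s t

lemma partialSum_mono (c : ℕ → ℕ) : Monotone (partialSum c) := fun _ _ h =>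
  sum_le_sum_of_subset (range_subset_range.2 h)

lemma partialSum_strictMono {c : ℕ → ℕ} (hc : ∀ i, 0 < c i) : StrictMono (partialSum c) :=
  strictMono_nat_of_lt_succ fun t => by rw [partialSum_succ]; linarith [hc t]

lemma partialSum_pos {c : ℕ → ℕ} (hc : ∀ i, 0 < c i) (t : ℕ) :
    0 < partialSum c (t + 1) := by
  rw [partialSum_succ]
  linarith [hc t]

section Runs

variable {c d : ℕ → ℕ} {r t j : ℕ}

def eRun (c d : ℕ → ℕ) (t : ℕ) : Finset ℕ :=
  Ico (partialSum c (t + 1) + partialSum d t) (partialSum c (t + 1) + partialSum d (t + 1))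

/-- The path `N^(c 0) E^(d 0) ⋯ N^(c (r-1)) E^(d (r-1))`, encoded as in `corners`. -/
def runsPath (r : ℕ) (c d : ℕ → ℕ) : Finset ℕ := (range r).biUnion (eRun c d)

lemma mem_runsPath {i : ℕ} :
    i ∈ runsPath r c d ↔ ∃ t < r, partialSum c (t + 1) + partialSum d t ≤ i ∧
      i < partialSum c (t + 1) + partialSum d (t + 1) := by
  simp [runsPath, eRun]

lemma runsPath_succ : runsPath (r + 1) c d = runsPath r c d ∪ eRun c d r := by
  rw [runsPath, range_add_one, biUnion_insert, union_comm, runsPath]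

lemma runsPath_subset_range : runsPath r c d ⊆ range (partialSum c r + partialSum d r) := by
  intro i hi
  obtain ⟨t, ht, -, hi⟩ := mem_runsPath.1 hi
  have := partialSum_mono c (show t + 1 ≤ r from ht)
  have := partialSum_mono d (show t + 1 ≤ r from ht)
  rw [mem_range]
  omega

lemma card_runsPath : #(runsPath r c d) = partialSum d r := by
  induction r with
  | zero => simp [runsPath]
  | succ r ih =>
    have hdisj : Disjoint (runsPath r c d) (eRun c d r) := by
      refine disjoint_left.2 fun i hi hi' => ?_
      have := mem_range.1 (runsPath_subset_range hi)
      have := partialSum_mono c (Nat.le_add_right r 1)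
      simp only [eRun, mem_Ico] at hi'
      omega
    rw [runsPath_succ, card_union_of_disjoint hdisj, ih, eRun, Nat.card_Ico, partialSum_succ d]
    omega

lemma runsPath_inter_range (ht : t < r) (h1 : partialSum c t + partialSum d t ≤ j)
    (h2 : j ≤ partialSum c (t + 1) + partialSum d (t + 1)) :
    runsPath r c d ∩ range j =
      runsPath t c d ∪ Ico (partialSum c (t + 1) + partialSum d t) j := by
  have hd := partialSum_mono d (Nat.le_add_right t 1)
  ext i
  simp only [mem_inter, mem_union, mem_runsPath, mem_range, mem_Ico]
  constructor
  · rintro ⟨⟨s, hs, h3, h4⟩, hij⟩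
    rcases lt_trichotomy s t with hst | rfl | hst
    · exact Or.inl ⟨s, hst, h3, h4⟩
    · exact Or.inr ⟨h3, hij⟩
    · have := partialSum_mono c (show t + 1 ≤ s + 1 by omega)
      have := partialSum_mono d (show t + 1 ≤ s by omega)
      omega
  · rintro (⟨s, hst, h3, h4⟩ | ⟨h3, h4⟩)
    · have := partialSum_mono c (show s + 1 ≤ t by omega)
      have := partialSum_mono d (show s + 1 ≤ t by omega)
      exact ⟨⟨s, hst.trans ht, h3, h4⟩, by omega⟩
    · exact ⟨⟨t, ht, h3, by omega⟩, h4⟩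

lemma card_runsPath_inter_range (ht : t < r) (h1 : partialSum c t + partialSum d t ≤ j)
    (h2 : j ≤ partialSum c (t + 1) + partialSum d (t + 1)) :
    #(runsPath r c d ∩ range j) =
      partialSum d t + (j - (partialSum c (t + 1) + partialSum d t)) := by
  have hdisj : Disjoint (runsPath t c d) (Ico (partialSum c (t + 1) + partialSum d t) j) := by
    refine disjoint_left.2 fun i hi hi' => ?_
    have := mem_range.1 (runsPath_subset_range hi)
    have := partialSum_mono c (Nat.le_add_right t 1)
    rw [mem_Ico] at hi'
    omega
  rw [runsPath_inter_range ht h1 h2, card_union_of_disjoint hdisj, card_runsPath, Nat.card_Ico]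

lemma card_runsPath_inter_range_boundary (ht : t ≤ r) :
    #(runsPath r c d ∩ range (partialSum c t + partialSum d t)) = partialSum d t := by
  cases t with
  | zero => simp
  | succ t =>
    have := partialSum_mono c (Nat.le_add_right t 1)
    have := partialSum_mono d (Nat.le_add_right t 1)
    rw [card_runsPath_inter_range (by omega) (by omega) le_rfl, partialSum_succ d]
    omega

lemma boundary_notMem_runsPath (hc : ∀ i, 0 < c i) (t : ℕ) :
    partialSum c t + partialSum d t ∉ runsPath r c d := by
  rw [mem_runsPath]
  rintro ⟨s, -, h1, h2⟩
  rcases Nat.lt_or_ge s t with hst | hst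
  · have := partialSum_mono c (show s + 1 ≤ t by omega)
    have := partialSum_mono d (show s + 1 ≤ t by omega)
    omega
  · have := partialSum_strictMono hc (show t < s + 1 by omega)
    have := partialSum_mono d hst
    omega

lemma zero_notMem_runsPath (hc : ∀ i, 0 < c i) : 0 ∉ runsPath r c d := by
  simpa using boundary_notMem_runsPath (d := d) (r := r) hc 0

lemma last_mem_runsPath (hd : ∀ i, 0 < d i) :
    partialSum c (r + 1) + partialSum d (r + 1) - 1 ∈ runsPath (r + 1) c d := by
  have := partialSum_strictMono hd (Nat.lt_add_one r)
  exact mem_runsPath.2 ⟨r, Nat.lt_add_one r, by omega, by omega⟩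

/-- The Dyck condition, checked only at the ends `(partialSum d t, partialSum c t)` of the
`E`-runs. -/
def RunsDyck (m n r : ℕ) (c d : ℕ → ℕ) : Prop :=
  ∀ t ≤ r, partialSum d t * n ≤ partialSum c t * m

instance (m n r : ℕ) (c d : ℕ → ℕ) : Decidable (RunsDyck m n r c d) := by
  unfold RunsDyck; infer_instance

variable {m n k : ℕ}

lemma isDyck_runsPath_iff (hcs : partialSum c (k + 1) = n) (hds : partialSum d (k + 1) = m) :
    IsDyck m n (runsPath (k + 1) c d) ↔ RunsDyck m n (k + 1) c d := by
  constructor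
  · intro h t ht
    have hj : partialSum c t + partialSum d t ∈ range (m + n + 1) := by
      have := partialSum_mono c ht
      have := partialSum_mono d ht
      rw [mem_range]
      omega
    have := h _ hj
    rwa [card_runsPath_inter_range_boundary ht, Nat.add_sub_cancel_right] at this
  · intro h j hj
    obtain ⟨t, ht, h1, h2⟩ := exists_le_and_le_succ (fun t => partialSum c t + partialSum d t)
      (k := k) (j := j) (by simp) (by simp only [hcs, hds]; rw [mem_range] at hj; omega)
    rw [card_runsPath_inter_range (by omega) h1 h2]
    set a := partialSum d t + (j - (partialSum c (t + 1) + partialSum d t))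
    -- the prefix ends weakly above-left of corner `t` (inside an `N`-run) or of corner `t + 1`
    -- (inside an `E`-run)
    obtain ⟨s, hs, has, hsa⟩ :
        ∃ s ≤ k + 1, a ≤ partialSum d s ∧ partialSum c s ≤ j - a := by
      have := partialSum_mono c (Nat.le_add_right t 1)
      by_cases hj' : j ≤ partialSum c (t + 1) + partialSum d t
      · exact ⟨t, by omega, by omega, by omega⟩
      · exact ⟨t + 1, by omega, by omega, by omega⟩
    calc a * n ≤ partialSum d s * n := Nat.mul_le_mul_right n has
      _ ≤ partialSum c s * m := h s hs
      _ ≤ (j - a) * m := Nat.mul_le_mul_right m hsa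

lemma strictMono_corner (hc : ∀ i, 0 < c i) (hd : ∀ i, 0 < d i) :
    StrictMono fun t => partialSum c (t + 1) + partialSum d (t + 1) - 1 := fun s t hst => by
  have := partialSum_strictMono hc (show s + 1 < t + 1 by omega)
  have := partialSum_strictMono hd (show s + 1 < t + 1 by omega)
  dsimp only
  omega

lemma corners_runsPath (hc : ∀ i, 0 < c i) (hd : ∀ i, 0 < d i)
    (hcs : partialSum c (k + 1) = n) (hds : partialSum d (k + 1) = m) :
    corners m n (runsPath (k + 1) c d) =
      (range k).image fun t => partialSum c (t + 1) + partialSum d (t + 1) - 1 := by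
  ext i
  simp only [corners, mem_filter, mem_range, mem_image]
  constructor
  · rintro ⟨hi, hiS, hiS'⟩
    obtain ⟨t, ht, h1, h2⟩ := mem_runsPath.1 hiS
    have hend : i + 1 = partialSum c (t + 1) + partialSum d (t + 1) := by
      by_contra hne
      exact hiS' (mem_runsPath.2 ⟨t, ht, by omega, by omega⟩)
    refine ⟨t, ?_, by omega⟩
    by_contra hkt
    obtain rfl : t = k := by omega
    omega
  · rintro ⟨t, ht, rfl⟩
    have := partialSum_strictMono hc (show t + 1 < k + 1 by omega)
    have := partialSum_strictMono hd (show t + 1 < k + 1 by omega)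
    have := partialSum_strictMono hd (Nat.lt_add_one t)
    refine ⟨by omega, mem_runsPath.2 ⟨t, by omega, by omega, by omega⟩, ?_⟩
    rw [show partialSum c (t + 1) + partialSum d (t + 1) - 1 + 1 =
      partialSum c (t + 1) + partialSum d (t + 1) by omega]
    exact boundary_notMem_runsPath hc (t + 1)

lemma card_corners_runsPath (hc : ∀ i, 0 < c i) (hd : ∀ i, 0 < d i)
    (hcs : partialSum c (k + 1) = n) (hds : partialSum d (k + 1) = m) :
    #(corners m n (runsPath (k + 1) c d)) = k := by
  rw [corners_runsPath hc hd hcs hds, card_image_of_injective _ (strictMono_corner hc hd).injective,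
    card_range]

lemma runsPath_inj {c' d' : ℕ → ℕ}
    (hc : ∀ i, 0 < c i) (hd : ∀ i, 0 < d i) (hc' : ∀ i, 0 < c' i) (hd' : ∀ i, 0 < d' i)
    (hcs : partialSum c (k + 1) = n) (hds : partialSum d (k + 1) = m)
    (hcs' : partialSum c' (k + 1) = n) (hds' : partialSum d' (k + 1) = m)
    (h : runsPath (k + 1) c d = runsPath (k + 1) c' d') (ht : t ≤ k) :
    c t = c' t ∧ d t = d' t := by
  have hB : ∀ s ≤ k + 1,
      partialSum c s + partialSum d s = partialSum c' s + partialSum d' s := by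
    rintro (_ | s) hs
    · simp
    rcases Nat.lt_or_ge s k with hsk | hsk
    · have := (strictMono_corner hc hd).eq_of_image_range_eq (strictMono_corner hc' hd')
        (by rw [← corners_runsPath hc hd hcs hds, ← corners_runsPath hc' hd' hcs' hds', h]) hsk
      have := partialSum_pos hc s
      have := partialSum_pos hc' s
      omega
    · obtain rfl : s = k := by omega
      omega
  have hD : ∀ s ≤ k + 1, partialSum d s = partialSum d' s := fun s hs => by
    rw [← card_runsPath_inter_range_boundary (c := c) hs,
      ← card_runsPath_inter_range_boundary (c := c') (d := d') hs, h, hB s hs]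
  have h1 := hB t (by omega)
  have h2 := hB (t + 1) (by omega)
  have h3 := hD t (by omega)
  have h4 := hD (t + 1) (by omega)
  simp only [partialSum_succ] at h2 h4
  omega

end Runs

lemma zero_notMem_of_isDyck {m n : ℕ} {S : Finset ℕ} (hn : 1 ≤ n) (h : IsDyck m n S) :
    0 ∉ S := by
  intro h0
  have hS : S ∩ range 1 = {0} := by
    ext i
    simp only [mem_inter, mem_range, mem_singleton]
    exact ⟨fun hi => by omega, by rintro rfl; exact ⟨h0, one_pos⟩⟩
  have := h 1 (by simp; omega)
  rw [hS, card_singleton] at this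
  omega

lemma last_mem_of_isDyck {m n : ℕ} {S : Finset ℕ} (hm : 1 ≤ m) (hn : 1 ≤ n)
    (hS : S ⊆ range (m + n)) (hcard : #S = m) (h : IsDyck m n S) : m + n - 1 ∈ S := by
  by_contra hlast
  have hsub : S ⊆ range (m + n - 1) := fun i hi => by
    have := mem_range.1 (hS hi)
    have : i ≠ m + n - 1 := fun he => hlast (he ▸ hi)
    rw [mem_range]
    omega
  have := h (m + n - 1) (by simp)
  rw [inter_eq_left.2 hsub, hcard, show m + n - 1 - m = n - 1 by omega, Nat.sub_one_mul,
    mul_comm n m] at this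
  have := Nat.mul_pos (by omega : 0 < m) (by omega : 0 < n)
  omega

/-- Lattice paths whose first step is `N` and whose last step is `E`. -/
def pathsNE (m n : ℕ) : Finset (Finset ℕ) :=
  {S ∈ (range (m + n)).powerset | #S = m ∧ 0 ∉ S ∧ m + n - 1 ∈ S}

lemma card_pathsNE {m n : ℕ} (hm : 1 ≤ m) (hn : 1 ≤ n) :
    #(pathsNE m n) = (m + n - 2).choose (m - 1) := by
  calc #(pathsNE m n) = #(powersetCard (m - 1) (Ioo 0 (m + n - 1))) := by
        refine card_nbij' (·.erase (m + n - 1)) (insert (m + n - 1)) ?_ ?_ ?_ ?_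
        · intro S hS
          rw [mem_coe, pathsNE, mem_filter, mem_powerset] at hS
          obtain ⟨hsub, hcard, h0, hlast⟩ := hS
          refine mem_powersetCard.2 ⟨fun i hi => ?_, by rw [card_erase_of_mem hlast, hcard]⟩
          obtain ⟨hne, hi⟩ := mem_erase.1 hi
          have := mem_range.1 (hsub hi)
          have : i ≠ 0 := fun h => h0 (h ▸ hi)
          rw [mem_Ioo]
          omega
        · intro T hT
          obtain ⟨hsub, hcard⟩ := mem_powersetCard.1 hT
          have hlast : m + n - 1 ∉ T := fun h => by simpa using hsub h
          rw [mem_coe, pathsNE, mem_filter, mem_powerset]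
          refine ⟨insert_subset (by simp; omega) fun i hi => ?_, ?_, ?_, mem_insert_self _ _⟩
          · have := mem_Ioo.1 (hsub hi)
            rw [mem_range]
            omega
          · rw [card_insert_of_notMem hlast, hcard]
            omega
          · rw [mem_insert, not_or]
            exact ⟨by omega, fun h => by simpa using hsub h⟩
        · intro S hS
          exact insert_erase (mem_filter.1 hS).2.2.2
        · intro T hT
          exact erase_insert fun h => by simpa using (mem_powersetCard.1 hT).1 h
    _ = (m + n - 2).choose (m - 1) := by
        rw [card_powersetCard, Nat.card_Ioo, Nat.sub_zero, Nat.sub_sub]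

def compositions (k N : ℕ) : Finset (Fin (k + 1) → ℕ) :=
  {x ∈ piAntidiag univ N | ∀ i, 0 < x i}

lemma mem_compositions {k N : ℕ} {x : Fin (k + 1) → ℕ} :
    x ∈ compositions k N ↔ ∑ i, x i = N ∧ ∀ i, 0 < x i := by
  simp [compositions]

lemma card_compositions (k : ℕ) {N : ℕ} (hN : 1 ≤ N) :
    #(compositions k N) = (N - 1).choose k := by
  have hsub : ∀ x ∈ compositions k N, ∑ i, (x i - 1) + (k + 1) = N := fun x hx => by
    obtain ⟨hsum, hpos⟩ := mem_compositions.1 hx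
    have : ∑ i, (x i - 1 + 1) = N := by
      rw [← hsum]
      exact sum_congr rfl fun i _ => Nat.sub_add_cancel (hpos i)
    simpa [sum_add_distrib] using this
  rcases Nat.lt_or_ge N (k + 1) with hlt | hle
  · rw [Nat.choose_eq_zero_of_lt (by omega), card_eq_zero, eq_empty_iff_forall_notMem]
    intro x hx
    have := hsub x hx
    omega
  obtain ⟨j, rfl⟩ : ∃ j, N = j + (k + 1) := ⟨N - (k + 1), by omega⟩
  calc #(compositions k (j + (k + 1))) = #(piAntidiag (univ : Finset (Fin (k + 1))) j) := by
        refine card_nbij' (· - 1) (· + 1) (fun x hx => ?_) (fun y hy => ?_) (fun x hx => ?_)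
          (fun y _ => ?_)
        · have := hsub x hx
          simp only [mem_coe, mem_piAntidiag, Pi.sub_apply, Pi.one_apply]
          exact ⟨by omega, fun _ _ => mem_univ _⟩
        · simp only [mem_coe, mem_piAntidiag] at hy
          simp only [mem_coe, mem_compositions, Pi.add_apply, Pi.one_apply, sum_add_distrib, hy.1]
          simp
        · funext i
          exact Nat.sub_add_cancel ((mem_compositions.1 hx).2 i)
        · funext i
          simp
    _ = (j + (k + 1) - 1).choose k := by
        rw [card_piAntidiag_univ_fin, show j + (k + 1) - 1 = k + j by omega,
          show k + 1 + j - 1 = k + j by omega, Nat.choose_symm_add]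

def periodicExt {k : ℕ} (x : Fin (k + 1) → ℕ) (i : ℕ) : ℕ := x (i : Fin (k + 1))

def rotate {k : ℕ} (j : Fin (k + 1)) (x : Fin (k + 1) → ℕ) : Fin (k + 1) → ℕ :=
  fun i => x (j + i)

section Tuples

variable {k : ℕ} {x y : Fin (k + 1) → ℕ}

lemma partialSum_periodicExt (x : Fin (k + 1) → ℕ) :
    partialSum (periodicExt x) (k + 1) = ∑ i, x i := by
  rw [partialSum, ← Fin.sum_univ_eq_sum_range]
  simp [periodicExt]

lemma periodicExt_add_period (x : Fin (k + 1) → ℕ) (i : ℕ) :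
    periodicExt x (k + 1 + i) = periodicExt x i := by
  simp [periodicExt]

lemma eq_of_periodicExt_eq (h : ∀ i ≤ k, periodicExt x i = periodicExt y i) : x = y :=
  funext fun i => by simpa [periodicExt] using h i (by omega)

lemma periodicExt_rotate (j : Fin (k + 1)) (x : Fin (k + 1) → ℕ) :
    periodicExt (rotate j x) = fun i => periodicExt x (j + i) := by
  funext i
  simp [periodicExt, rotate]

lemma rotate_zero (x : Fin (k + 1) → ℕ) : rotate 0 x = x := by
  funext i
  simp [rotate]

lemma rotate_rotate (j j' : Fin (k + 1)) (x : Fin (k + 1) → ℕ) :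
    rotate j (rotate j' x) = rotate (j' + j) x := by
  funext i
  simp [rotate, add_assoc]

lemma rotate_mem_compositions {N : ℕ} (j : Fin (k + 1)) (hx : x ∈ compositions k N) :
    rotate j x ∈ compositions k N := by
  rw [mem_compositions] at hx ⊢
  exact ⟨(Equiv.sum_comp (Equiv.addLeft j) x).trans hx.1, fun i => hx.2 _⟩

end Tuples

section Pairs

variable {m n k : ℕ}

abbrev RunPair (k : ℕ) : Type := (Fin (k + 1) → ℕ) × (Fin (k + 1) → ℕ)

/-- Pairs `(c, d)` of compositions of `n` and `m` into `k + 1` parts: the lengths of the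
`N`-runs and of the `E`-runs of a path. -/
def runPairs (m n k : ℕ) : Finset (RunPair k) :=
  compositions k n ×ˢ compositions k m

def dyckRunPairs (m n k : ℕ) : Finset (RunPair k) :=
  {x ∈ runPairs m n k | RunsDyck m n (k + 1) (periodicExt x.1) (periodicExt x.2)}

def runPairPath (x : RunPair k) : Finset ℕ :=
  runsPath (k + 1) (periodicExt x.1) (periodicExt x.2)

lemma periodicExt_of_mem_runPairs {x : RunPair k} (hx : x ∈ runPairs m n k) :
    (∀ i, 0 < periodicExt x.1 i) ∧ (∀ i, 0 < periodicExt x.2 i) ∧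
      partialSum (periodicExt x.1) (k + 1) = n ∧ partialSum (periodicExt x.2) (k + 1) = m := by
  obtain ⟨h1, h2⟩ := mem_product.1 hx
  rw [mem_compositions] at h1 h2
  exact ⟨fun i => h1.2 _, fun i => h2.2 _, (partialSum_periodicExt _).trans h1.1,
    (partialSum_periodicExt _).trans h2.1⟩

lemma runPairPath_mem {x : RunPair k} (hx : x ∈ runPairs m n k) :
    runPairPath x ∈ {S ∈ pathsNE m n | #(corners m n S) = k} := by
  obtain ⟨hc, hd, hcs, hds⟩ := periodicExt_of_mem_runPairs hx
  have hsub := runsPath_subset_range (r := k + 1) (c := periodicExt x.1) (d := periodicExt x.2)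
  have hlast := last_mem_runsPath (r := k) (c := periodicExt x.1) hd
  rw [hcs, hds, add_comm n m] at hsub hlast
  simp only [pathsNE, mem_filter, mem_powerset]
  exact ⟨⟨hsub, card_runsPath.trans hds, zero_notMem_runsPath hc, hlast⟩,
    card_corners_runsPath hc hd hcs hds⟩

lemma runPairPath_injOn : Set.InjOn (@runPairPath k) ↑(runPairs m n k) := by
  intro x hx y hy h
  obtain ⟨hc, hd, hcs, hds⟩ := periodicExt_of_mem_runPairs hx
  obtain ⟨hc', hd', hcs', hds'⟩ := periodicExt_of_mem_runPairs hy
  have := fun t (ht : t ≤ k) => runsPath_inj hc hd hc' hd' hcs hds hcs' hds' h ht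
  exact Prod.ext (eq_of_periodicExt_eq fun t ht => (this t ht).1)
    (eq_of_periodicExt_eq fun t ht => (this t ht).2)

/-- Both sides sum to `C(m+n-2, m-1)` over all `k`, so the injections `runPairPath` are
bijections. -/
lemma card_runPairs_eq_card_pathsNE_filter (hm : 1 ≤ m) (hn : 1 ≤ n) (k : ℕ) :
    #(runPairs m n k) = #{S ∈ pathsNE m n | #(corners m n S) = k} := by
  have hle : ∀ i ∈ range (k + m + n),
      #(runPairs m n i) ≤ #{S ∈ pathsNE m n | #(corners m n S) = i} := fun i _ =>
    card_le_card_of_injOn runPairPath (fun _ hx => runPairPath_mem hx) runPairPath_injOn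
  refine (sum_eq_sum_iff_of_le hle).1 ?_ k (mem_range.2 (by omega))
  have hmaps : Set.MapsTo (fun S => #(corners m n S)) (pathsNE m n) (range (k + m + n)) :=
    fun S _ => mem_range.2 ((card_le_card (filter_subset _ _)).trans_lt (by simp; omega))
  rw [← card_eq_sum_card_fiberwise hmaps, card_pathsNE hm hn]
  simp only [runPairs, card_product, card_compositions _ hn, card_compositions _ hm]
  rw [Nat.sum_range_choose_mul_choose _ _ (by omega), Nat.choose_symm_add,
    show n - 1 + (m - 1) = m + n - 2 by omega]

lemma image_runPairPath (hm : 1 ≤ m) (hn : 1 ≤ n) :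
    (runPairs m n k).image runPairPath = {S ∈ pathsNE m n | #(corners m n S) = k} := by
  refine eq_of_subset_of_card_le (image_subset_iff.2 fun x hx => runPairPath_mem hx) ?_
  rw [card_image_of_injOn runPairPath_injOn, card_runPairs_eq_card_pathsNE_filter hm hn]

lemma card_dyck_eq_card_dyckRunPairs (hm : 1 ≤ m) (hn : 1 ≤ n) :
    #{S ∈ (range (m + n)).powerset | #S = m ∧ IsDyck m n S ∧ #(corners m n S) = k} =
      #(dyckRunPairs m n k) := by
  symm
  refine card_bij (fun x _ => runPairPath x) (fun x hx => ?_)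
    (fun x hx y hy h => runPairPath_injOn (filter_subset _ _ hx) (filter_subset _ _ hy) h)
    (fun S hS => ?_)
  · obtain ⟨hx, hD⟩ := mem_filter.1 hx
    obtain ⟨hc, hd, hcs, hds⟩ := periodicExt_of_mem_runPairs hx
    have := runPairPath_mem hx
    simp only [pathsNE, mem_filter, mem_powerset] at this ⊢
    exact ⟨this.1.1, this.1.2.1, (isDyck_runsPath_iff hcs hds).2 hD, this.2⟩
  · obtain ⟨hsub, hcard, hD, hk⟩ := by simpa only [mem_filter, mem_powerset] using hS
    have hS' : S ∈ {S ∈ pathsNE m n | #(corners m n S) = k} := by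
      simp only [pathsNE, mem_filter, mem_powerset]
      exact ⟨⟨hsub, hcard, zero_notMem_of_isDyck hn hD,
        last_mem_of_isDyck hm hn hsub hcard hD⟩, hk⟩
    obtain ⟨x, hx, rfl⟩ := mem_image.1 ((image_runPairPath hm hn).symm ▸ hS')
    obtain ⟨-, -, hcs, hds⟩ := periodicExt_of_mem_runPairs hx
    exact ⟨x, mem_filter.2 ⟨hx, (isDyck_runsPath_iff hcs hds).1 hD⟩, rfl⟩

end Pairs

def height (m n : ℕ) (c d : ℕ → ℕ) (t : ℕ) : ℤ :=
  partialSum c t * m - partialSum d t * n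

section Cycle

variable {m n : ℕ} {c d : ℕ → ℕ}

lemma runsDyck_shift_iff {r j : ℕ} :
    RunsDyck m n r (fun i => c (j + i)) (fun i => d (j + i)) ↔
      ∀ t ≤ r, height m n c d j ≤ height m n c d (j + t) := by
  refine forall₂_congr fun t _ => ?_
  rw [height, height, partialSum_add c, partialSum_add d, ← Nat.cast_le (α := ℤ)]
  push_cast
  constructor <;> intro h <;> linarith

lemma height_periodic {p : ℕ} (hc : ∀ i, c (p + i) = c i) (hd : ∀ i, d (p + i) = d i)
    (hcs : partialSum c p = n) (hds : partialSum d p = m) :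
    Function.Periodic (height m n c d) p := fun t => by
  simp only [height, add_comm t p, partialSum_add, hc, hd, hcs, hds]
  push_cast
  ring

/-- Equal heights at `i < j < p` would give `n ∣ (partialSum c j - partialSum c i) * m` with
`0 < partialSum c j - partialSum c i < n`. -/
lemma height_injOn (hco : Nat.Coprime m n) (hc : ∀ i, 0 < c i) {p : ℕ}
    (hcs : partialSum c p = n) : Set.InjOn (height m n c d) (Set.Iio p) := by
  suffices h : ∀ i j, i < j → j < p → height m n c d i ≠ height m n c d j by
    intro i hi j hj hij
    rcases lt_trichotomy i j with hlt | rfl | hlt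
    · exact absurd hij (h i j hlt hj)
    · rfl
    · exact absurd hij.symm (h j i hlt hi)
  intro i j hij hjp heq
  obtain ⟨a, ha⟩ := Nat.exists_eq_add_of_le (partialSum_mono c hij.le)
  obtain ⟨b, hb⟩ := Nat.exists_eq_add_of_le (partialSum_mono d hij.le)
  have h1 := partialSum_strictMono hc hij
  have h2 := partialSum_strictMono hc hjp
  have hab : a * m = b * n := by
    simp only [height, ha, hb] at heq
    push_cast at heq
    exact_mod_cast (by linarith : (a : ℤ) * m = b * n)
  have : n ∣ a := hco.symm.dvd_of_dvd_mul_right ⟨b, by rw [hab, mul_comm]⟩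
  have := Nat.le_of_dvd (by omega) this
  omega

end Cycle

section Rotation

variable {m n k : ℕ}

def rotatePair (j : Fin (k + 1)) (x : RunPair k) : RunPair k :=
  (rotate j x.1, rotate j x.2)

lemma rotatePair_zero (x : RunPair k) : rotatePair 0 x = x := by
  simp [rotatePair, rotate_zero]

lemma rotatePair_rotatePair (j j' : Fin (k + 1)) (x : RunPair k) :
    rotatePair j (rotatePair j' x) = rotatePair (j' + j) x := by
  simp [rotatePair, rotate_rotate]

lemma rotatePair_mem_runPairs {x : RunPair k} (j : Fin (k + 1)) (hx : x ∈ runPairs m n k) :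
    rotatePair j x ∈ runPairs m n k := by
  obtain ⟨h1, h2⟩ := mem_product.1 hx
  exact mem_product.2 ⟨rotate_mem_compositions j h1, rotate_mem_compositions j h2⟩

lemma existsUnique_rotatePair_mem_dyckRunPairs (hco : Nat.Coprime m n) {x : RunPair k}
    (hx : x ∈ runPairs m n k) :
    ∃! j : Fin (k + 1), rotatePair j x ∈ dyckRunPairs m n k := by
  obtain ⟨hc, -, hcs, hds⟩ := periodicExt_of_mem_runPairs hx
  set F := height m n (periodicExt x.1) (periodicExt x.2)
  have hF : Function.Periodic F (k + 1) :=
    height_periodic (periodicExt_add_period x.1) (periodicExt_add_period x.2) hcs hds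
  have key : ∀ j : Fin (k + 1), rotatePair j x ∈ dyckRunPairs m n k ↔ ∀ i, F j ≤ F i := by
    intro j
    rw [dyckRunPairs, mem_filter, and_iff_right (rotatePair_mem_runPairs j hx),
      hF.forall_le_iff j.isLt, ← runsDyck_shift_iff]
    simp only [rotatePair, periodicExt_rotate]
  obtain ⟨j, ⟨hj, hmin⟩, huniq⟩ :=
    hF.existsUnique_forall_le k.succ_pos (height_injOn hco hc hcs)
  exact ⟨⟨j, hj⟩, (key _).2 hmin, fun j' hj' =>
    Fin.ext (huniq j' ⟨j'.isLt, (key j').1 hj'⟩)⟩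

lemma card_runPairs_eq_mul_card_dyckRunPairs (hco : Nat.Coprime m n) :
    #(runPairs m n k) = (k + 1) * #(dyckRunPairs m n k) := by
  have hsub : dyckRunPairs m n k ⊆ runPairs m n k := filter_subset _ _
  calc #(runPairs m n k) = #((univ : Finset (Fin (k + 1))) ×ˢ dyckRunPairs m n k) := by
        symm
        refine card_bij (fun p _ => rotatePair p.1 p.2)
          (fun p hp => rotatePair_mem_runPairs p.1 (hsub (mem_product.1 hp).2)) ?_ fun y hy => ?_
        · rintro ⟨j, x⟩ hx ⟨j', x'⟩ hx' h
          obtain ⟨-, hx⟩ := mem_product.1 hx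
          obtain ⟨-, hx'⟩ := mem_product.1 hx'
          have hx'x : x' = rotatePair (j - j') x := by
            have := congrArg (rotatePair (-j')) h
            simp only [rotatePair_rotatePair, add_neg_cancel, rotatePair_zero] at this
            rw [← this, sub_eq_add_neg]
          obtain ⟨i, -, hi⟩ := existsUnique_rotatePair_mem_dyckRunPairs hco (hsub hx)
          have h0 := hi 0 (show rotatePair 0 x ∈ _ by rwa [rotatePair_zero])
          have hjj' := hi (j - j') (show rotatePair (j - j') x ∈ _ by rwa [← hx'x])
          obtain rfl : j = j' := sub_eq_zero.1 (hjj'.trans h0.symm)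
          simp [hx'x, rotatePair_zero]
        · obtain ⟨j, hj, -⟩ := existsUnique_rotatePair_mem_dyckRunPairs hco hy
          exact ⟨(-j, rotatePair j y), mem_product.2 ⟨mem_univ _, hj⟩, by
            simp only [rotatePair_rotatePair, add_neg_cancel, rotatePair_zero]⟩
    _ = (k + 1) * #(dyckRunPairs m n k) := by rw [card_product, card_univ, Fintype.card_fin]

end Rotation

theorem succ_mul_card_dyck_eq {m n k : ℕ} (hm : 1 ≤ m) (hn : 1 ≤ n) (hco : Nat.Coprime m n) :
    (k + 1) * #{S ∈ (range (m + n)).powerset | #S = m ∧ IsDyck m n S ∧ #(corners m n S) = k} =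
      (m - 1).choose k * (n - 1).choose k := by
  rw [card_dyck_eq_card_dyckRunPairs hm hn, ← card_runPairs_eq_mul_card_dyckRunPairs hco,
    runPairs, card_product, card_compositions k hn, card_compositions k hm, mul_comm]

end RationalDyck

/-- For coprime `m, n ≥ 1`, the number of Dyck paths in the `m × n` rectangle with
exactly `k` external corners equals `N_k = (1/(k+1)) C(m-1,k) C(n-1,k)`. -/
theorem card_dyck_paths_with_corners (m n k : ℕ) (hm : 1 ≤ m) (hn : 1 ≤ n)
    (hco : Nat.Coprime m n) :
    ((((Finset.range (m + n)).powerset.filter fun S =>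
        S.card = m ∧ IsDyck m n S ∧ (corners m n S).card = k).card : ℚ)) =
      (1 / ((k : ℚ) + 1)) * ((m - 1).choose k : ℚ) * ((n - 1).choose k : ℚ) := by
  rw [mul_assoc, one_div, eq_inv_mul_iff_mul_eq₀ (by positivity)]
  exact_mod_cast RationalDyck.succ_mul_card_dyck_eq hm hn hco
end

section
/- For integers m ≥ n ≥ 1 and 0 ≤ k ≤ n−1, setting N_l = (1/(l+1)) · C(m−1, l) · C(n−1, l), the following identity of rational numbers holds: Σ_{l=k}^{n−1} C(l, k) · N_l = (m+n−k−1)! / ( m · n · (n−k−1)! · (m−k−1)! · k! ). -/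
/-!
Since `m · C(m-1, l) / (l+1) = C(m, l+1)` and `C(n-1, l) · C(l, k) = C(n-1, k) · C(n-1-k, l-k)`,
the sum equals `C(n-1, k) / m · Σ_l C(n-1-k, l-k) · C(m, l+1)`. The remaining sum is a
Vandermonde convolution with value `C(m+n-1-k, n)`, and writing both binomial coefficients
as quotients of factorials gives the right-hand side.
-/

open Finset Nat

theorem sum_range_choose_mul_choose_add (M a r : ℕ) :
    ∑ t ∈ range (a + 1), a.choose t * M.choose (r + t) = (M + a).choose (r + a) := by
  rw [add_choose_eq, Nat.sum_antidiagonal_eq_sum_range_succ (fun i j => M.choose i * a.choose j),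
    Nat.succ_eq_add_one, add_assoc, sum_range_add _ r (a + 1)]
  have below_r : ∑ i ∈ range r, M.choose i * a.choose (r + a - i) = 0 :=
    sum_eq_zero fun i hi => by
      rw [choose_eq_zero_of_lt (n := a) (by simp at hi; omega), mul_zero]
  rw [below_r, zero_add]
  refine sum_congr rfl fun t ht => ?_
  rw [mem_range] at ht
  rw [show r + a - (r + t) = a - t by omega, choose_symm (by omega), mul_comm]

theorem sum_Icc_choose_sub_mul_choose_succ (M N k : ℕ) (hk : k ≤ N) :
    ∑ l ∈ Icc k N, (N - k).choose (l - k) * M.choose (l + 1) = (M + (N - k)).choose (N + 1) := by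
  rw [← Ico_add_one_right_eq_Icc, sum_Ico_eq_sum_range, show N + 1 - k = N - k + 1 by omega]
  simp only [Nat.add_sub_cancel_left]
  rw [show N + 1 = k + 1 + (N - k) by omega, ← sum_range_choose_mul_choose_add]
  exact sum_congr rfl fun t _ => by rw [add_right_comm]

theorem choose_pred_div_succ {m : ℕ} (hm : 0 < m) (l : ℕ) :
    ((m - 1).choose l : ℚ) / (l + 1) = m.choose (l + 1) / m := by
  have h := add_one_mul_choose_eq (m - 1) l
  rw [Nat.sub_add_cancel hm] at h
  rw [div_eq_div_iff (by positivity) (by positivity)]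
  exact_mod_cast (by linarith [h] : (m - 1).choose l * m = m.choose (l + 1) * (l + 1))

theorem choose_mul_narayana_eq {m : ℕ} (hm : 0 < m) (N : ℕ) {k l : ℕ} (hkl : k ≤ l) :
    (l.choose k : ℚ) * (1 / ((l : ℚ) + 1) * ((m - 1).choose l : ℚ) * (N.choose l : ℚ)) =
      (N.choose k : ℚ) / m * ((N - k).choose (l - k) * m.choose (l + 1) : ℕ) := by
  have h := choose_pred_div_succ hm l
  have hN : (N.choose l : ℚ) * l.choose k = N.choose k * (N - k).choose (l - k) := by
    exact_mod_cast choose_mul hkl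
  push_cast
  calc _ = (N.choose l : ℚ) * l.choose k * (((m - 1).choose l : ℚ) / (l + 1)) := by ring
    _ = _ := by rw [hN, h]; ring

theorem choose_div_mul_choose_eq {m N k : ℕ} (hkN : k ≤ N) (hkm : k < m) :
    (N.choose k : ℚ) / m * (m + (N - k)).choose (N + 1) =
      (m + (N - k))! / (m * (N + 1) * (N - k)! * (m - k - 1)! * k !) := by
  rw [cast_choose ℚ hkN, cast_choose ℚ (by omega), show m + (N - k) - (N + 1) = m - k - 1 by omega,
    factorial_succ]
  have : (m : ℚ) ≠ 0 := Nat.cast_ne_zero.2 (by omega)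
  push_cast
  field_simp

/-- For `m ≥ n ≥ 1` and `0 ≤ k ≤ n-1`, with `N_l = (1/(l+1)) C(m-1,l) C(n-1,l)`:
`Σ_{l=k}^{n-1} C(l,k) N_l = (m+n-k-1)! / (m · n · (n-k-1)! (m-k-1)! k!)`
as rational numbers. -/
theorem narayana_sum (m n k : ℕ) (hn : 1 ≤ n) (hnm : n ≤ m) (hk : k ≤ n - 1) :
    (∑ l ∈ Finset.Icc k (n - 1),
        (l.choose k : ℚ) *
          ((1 / ((l : ℚ) + 1)) * ((m - 1).choose l : ℚ) * ((n - 1).choose l : ℚ))) =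
      (Nat.factorial (m + n - k - 1) : ℚ) /
        ((m : ℚ) * (n : ℚ) * (Nat.factorial (n - k - 1) : ℚ) *
          (Nat.factorial (m - k - 1) : ℚ) * (Nat.factorial k : ℚ)) := by
  obtain ⟨N, rfl⟩ : ∃ N, n = N + 1 := ⟨n - 1, by omega⟩
  simp only [Nat.add_sub_cancel] at hk ⊢
  rw [sum_congr rfl fun l hl => choose_mul_narayana_eq (by omega) N (mem_Icc.1 hl).1,
    ← mul_sum, ← Nat.cast_sum, sum_Icc_choose_sub_mul_choose_succ m N k hk,
    choose_div_mul_choose_eq hk (by omega), show m + (N + 1) - k - 1 = m + (N - k) by omega,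
    show N + 1 - k - 1 = N - k by omega]
  push_cast
  rfl
end

section
/- Let m, n ≥ 1 be coprime integers and k ≥ 0 with k ≤ n−1 and k ≤ m−1. The number of pairs (π, M), where π is a Dyck path in the m×n rectangle and M is a k-element subset of the set of external corners of π (a marked Dyck path with k marks), equals (m+n−k−1)! / ( m · n · (n−k−1)! · (m−k−1)! · k! ). -/
/-!
Write `A k` for the number of marked Dyck paths with `k` marks and `L = m + n`. A Dyck path
starts with `N` and ends with `E`, so read cyclically it has exactly one more external corner
than read linearly, the wrap-around one. Hence choosing `k + 1` cyclic corners of a Dyck path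
and distinguishing one of them can be done in `(k + 1) (A k + A (k + 1))` ways. Cutting the
cyclic word just after the distinguished corner gives a path from `N` to `E` with `k` marked
corners, and by the cycle lemma (for coprime `m, n` exactly one rotation of a word is a Dyck
path) this is a bijection. Those marked paths are counted directly: the marks are `k`
disjoint dominoes `EN` among the `L - 2` inner steps and the other steps are free, giving
`C(L - k - 2, k) C(L - 2k - 2, m - k - 1)`. The claimed formula satisfies the same recursion
and, like `A`, vanishes for `k ≥ min m n`.
-/

open Finset
open scoped Nat

namespace MarkedDyckPath

variable {m n L : ℕ} {S T : Finset ℕ}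

def prefixCount (S : Finset ℕ) (j : ℕ) : ℕ := #(S ∩ range j)

lemma prefixCount_succ (S : Finset ℕ) (j : ℕ) :
    prefixCount S (j + 1) = prefixCount S j + if j ∈ S then 1 else 0 := by
  unfold prefixCount
  split_ifs with hj
  · rw [range_add_one, inter_insert_of_mem hj, card_insert_of_notMem (by simp)]
  · rw [range_add_one, inter_insert_of_notMem hj, add_zero]

lemma prefixCount_le (S : Finset ℕ) (j : ℕ) : prefixCount S j ≤ j :=
  (card_le_card inter_subset_right).trans_eq (card_range j)

lemma prefixCount_eq_card (hS : S ⊆ range L) : prefixCount S L = #S := by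
  rw [prefixCount, inter_eq_left.2 hS]

/-- `b * m - a * n` for the lattice point `(a, b)` reached after `j` steps: the (scaled)
height of the path above the diagonal of the `m × n` rectangle, where `L = m + n`. -/
def excess (m L : ℕ) (S : Finset ℕ) (j : ℕ) : ℤ := m * j - L * prefixCount S j

lemma isDyck_iff_excess_nonneg :
    IsDyck m n S ↔ ∀ j ≤ m + n, 0 ≤ excess m (m + n) S j := by
  have key : ∀ j, prefixCount S j * n ≤ (j - prefixCount S j) * m ↔
      0 ≤ excess m (m + n) S j := fun j => by
    have := prefixCount_le S j
    unfold excess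
    zify [this]
    constructor <;> intro h <;> nlinarith
  simp only [IsDyck, mem_range, Nat.lt_succ_iff]
  exact forall₂_congr fun j _ => key j

lemma excess_zero (m L : ℕ) (S : Finset ℕ) : excess m L S 0 = 0 := by
  simp [excess, prefixCount]

lemma excess_succ (m L : ℕ) (S : Finset ℕ) (j : ℕ) :
    excess m L S (j + 1) = excess m L S j + m - if j ∈ S then (L : ℤ) else 0 := by
  unfold excess
  rw [prefixCount_succ]
  split_ifs <;> push_cast <;> ring

lemma excess_eq_zero (hS : S ⊆ range L) (hcard : #S = m) : excess m L S L = 0 := by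
  rw [excess, prefixCount_eq_card hS, hcard]
  ring

/-- Since `excess S 0 = excess S L = 0`, the step rule of `excess_succ` also holds across the
wrap-around of the cyclic word. -/
lemma excess_succ_mod (hL : 0 < L) (hS : S ⊆ range L) (hcard : #S = m) (v : ℕ) :
    excess m L S ((v + 1) % L) =
      excess m L S (v % L) + m - if v % L ∈ S then (L : ℤ) else 0 := by
  have hv : v % L < L := Nat.mod_lt v hL
  rcases Nat.lt_or_ge (v % L + 1) L with h | h
  · rw [← Nat.mod_add_mod, Nat.mod_eq_of_lt h, excess_succ]
  · have hlast : v % L + 1 = L := by omega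
    rw [← Nat.mod_add_mod, hlast, Nat.mod_self, excess_zero, ← excess_succ, hlast,
      excess_eq_zero hS hcard]

def rotate (L u : ℕ) (S : Finset ℕ) : Finset ℕ := {j ∈ range L | (u + j) % L ∈ S}

@[simp]
lemma mem_rotate {u j : ℕ} : j ∈ rotate L u S ↔ j < L ∧ (u + j) % L ∈ S := by
  simp [rotate]

lemma rotate_subset_range (u : ℕ) (S : Finset ℕ) : rotate L u S ⊆ range L :=
  filter_subset _ _

lemma rotate_mono (u : ℕ) (h : S ⊆ T) : rotate L u S ⊆ rotate L u T :=
  fun _ hj => mem_rotate.2 ⟨(mem_rotate.1 hj).1, h (mem_rotate.1 hj).2⟩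

lemma rotate_rotate (u v : ℕ) (S : Finset ℕ) :
    rotate L u (rotate L v S) = rotate L (v + u) S := by
  ext j
  simp only [mem_rotate, Nat.add_mod_mod, add_assoc]
  exact ⟨fun h => ⟨h.1, h.2.2⟩, fun h => ⟨h.1, Nat.mod_lt _ (by omega), h.2⟩⟩

lemma rotate_zero (hS : S ⊆ range L) : rotate L 0 S = S := by
  ext j
  simp only [mem_rotate, zero_add]
  exact ⟨fun h => by simpa [Nat.mod_eq_of_lt h.1] using h.2,
    fun h => have hj := mem_range.1 (hS h); ⟨hj, by rwa [Nat.mod_eq_of_lt hj]⟩⟩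

lemma rotate_mod (u : ℕ) (S : Finset ℕ) : rotate L (u % L) S = rotate L u S := by
  ext j
  simp [Nat.mod_add_mod]

lemma eq_of_add_mod_eq {u j j' : ℕ} (hj : j < L) (hj' : j' < L)
    (h : (u + j) % L = (u + j') % L) : j = j' :=
  (Nat.ModEq.add_left_cancel' u h).eq_of_lt_of_lt hj hj'

lemma exists_add_mod_eq {i : ℕ} (hi : i < L) (u : ℕ) : ∃ j < L, (u + j) % L = i := by
  refine ⟨(i + (L - u % L)) % L, Nat.mod_lt _ (by omega), ?_⟩
  have hu := Nat.div_add_mod u L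
  have hr := Nat.mod_lt u (show 0 < L by omega)
  rw [Nat.add_mod_mod, show u + (i + (L - u % L)) = i + L * (u / L + 1) by
    rw [Nat.mul_add]; omega, Nat.add_mul_mod_self_left, Nat.mod_eq_of_lt hi]

lemma card_rotate (hS : S ⊆ range L) (u : ℕ) : #(rotate L u S) = #S := by
  refine card_bij (fun j _ => (u + j) % L) (fun j hj => (mem_rotate.1 hj).2)
    (fun j hj j' hj' h => eq_of_add_mod_eq (mem_rotate.1 hj).1 (mem_rotate.1 hj').1 h)
    fun i hi => ?_
  obtain ⟨j, hj, rfl⟩ := exists_add_mod_eq (mem_range.1 (hS hi)) u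
  exact ⟨j, mem_rotate.2 ⟨hj, hi⟩, rfl⟩

lemma rotate_rotate_of_mod_eq_zero (hS : S ⊆ range L) {u w : ℕ} (h : (u + w) % L = 0) :
    rotate L w (rotate L u S) = S := by
  rw [rotate_rotate, ← rotate_mod, h, rotate_zero hS]

lemma rotate_inj (hS : S ⊆ range L) (hT : T ⊆ range L) {u : ℕ} :
    rotate L u S = rotate L u T ↔ S = T := by
  refine ⟨fun h => ?_, congrArg _⟩
  rcases Nat.eq_zero_or_pos L with rfl | hL
  · simp_all
  obtain ⟨w, -, hw⟩ := exists_add_mod_eq hL u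
  rw [← rotate_rotate_of_mod_eq_zero hS hw, h, rotate_rotate_of_mod_eq_zero hT hw]

lemma excess_rotate (hL : 0 < L) (hS : S ⊆ range L) (hcard : #S = m) (u : ℕ) :
    ∀ j ≤ L, excess m L (rotate L u S) j = excess m L S ((u + j) % L) - excess m L S (u % L)
  | 0, _ => by simp [excess_zero]
  | j + 1, hj => by
    have hmem : j ∈ rotate L u S ↔ (u + j) % L ∈ S := by simp [show j < L by omega]
    rw [excess_succ, excess_rotate hL hS hcard u j (by omega), ← add_assoc,
      excess_succ_mod hL hS hcard]
    simp only [hmem]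
    ring

lemma isDyck_rotate_iff (hL : 0 < m + n) (hS : S ⊆ range (m + n)) (hcard : #S = m)
    (u : ℕ) : IsDyck m n (rotate (m + n) u S) ↔
      ∀ v < m + n, excess m (m + n) S (u % (m + n)) ≤ excess m (m + n) S v := by
  have key : ∀ j ≤ m + n, 0 ≤ excess m (m + n) (rotate (m + n) u S) j ↔
      excess m (m + n) S (u % (m + n)) ≤ excess m (m + n) S ((u + j) % (m + n)) :=
    fun j hj => by rw [excess_rotate hL hS hcard u j hj, sub_nonneg]
  rw [isDyck_iff_excess_nonneg]
  constructor
  · intro h v hv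
    obtain ⟨j, hj, rfl⟩ := exists_add_mod_eq hv u
    exact (key j hj.le).1 (h j hj.le)
  · exact fun h j hj => (key j hj).2 (h _ (Nat.mod_lt _ hL))

lemma excess_injOn (hco : Nat.Coprime m n) (S : Finset ℕ) :
    Set.InjOn (excess m (m + n) S) (range (m + n)) := by
  intro v hv v' hv' h
  have hv := mem_range.1 hv
  have hv' := mem_range.1 hv'
  have hdvd : ((m + n : ℕ) : ℤ) ∣ m * ((v : ℤ) - v') :=
    ⟨prefixCount S v - prefixCount S v', by
      simp only [excess] at h
      push_cast at h ⊢
      linear_combination h⟩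
  have hcop : IsCoprime ((m + n : ℕ) : ℤ) m :=
    Nat.isCoprime_iff_coprime.2 (Nat.coprime_self_add_left.2 hco.symm)
  have := Int.eq_zero_of_abs_lt_dvd (hcop.dvd_of_dvd_mul_left hdvd)
    (abs_sub_lt_iff.2 ⟨by push_cast; omega, by push_cast; omega⟩)
  omega

lemma exists_isDyck_rotate (hL : 0 < m + n) (hS : S ⊆ range (m + n)) (hcard : #S = m) :
    ∃ u < m + n, IsDyck m n (rotate (m + n) u S) := by
  obtain ⟨u, hu, hmin⟩ := exists_min_image (range (m + n)) (excess m (m + n) S)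
    (nonempty_range_iff.2 hL.ne')
  have hu := mem_range.1 hu
  refine ⟨u, hu, (isDyck_rotate_iff hL hS hcard u).2 fun v hv => ?_⟩
  rw [Nat.mod_eq_of_lt hu]
  exact hmin v (mem_range.2 hv)

/-- Cycle lemma: the Dyck rotations start at the minima of the excess, which by
`excess_injOn` is attained only once. -/
lemma eq_of_isDyck_rotate (hco : Nat.Coprime m n) (hS : S ⊆ range (m + n))
    (hcard : #S = m) {u v : ℕ} (hu : u < m + n) (hv : v < m + n)
    (hDu : IsDyck m n (rotate (m + n) u S)) (hDv : IsDyck m n (rotate (m + n) v S)) :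
    u = v := by
  have hL : 0 < m + n := by omega
  rw [isDyck_rotate_iff hL hS hcard, Nat.mod_eq_of_lt hu] at hDu
  rw [isDyck_rotate_iff hL hS hcard, Nat.mod_eq_of_lt hv] at hDv
  exact excess_injOn hco S (mem_range.2 hu) (mem_range.2 hv)
    ((hDu v hv).antisymm (hDv u hu))

lemma zero_notMem_of_isDyck (hn : 1 ≤ n) (h : IsDyck m n S) : 0 ∉ S := by
  intro h0
  have := isDyck_iff_excess_nonneg.1 h 1 (by omega)
  rw [excess_succ, excess_zero, if_pos h0] at this
  push_cast at this
  omega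

lemma last_mem_of_isDyck (hm : 1 ≤ m) (hS : S ⊆ range (m + n)) (hcard : #S = m)
    (h : IsDyck m n S) : m + n - 1 ∈ S := by
  by_contra hlast
  have hpos := isDyck_iff_excess_nonneg.1 h (m + n - 1) (by omega)
  have := excess_succ m (m + n) S (m + n - 1)
  rw [Nat.sub_add_cancel (by omega), excess_eq_zero hS hcard, if_neg hlast] at this
  omega

def cycCorners (L : ℕ) (S : Finset ℕ) : Finset ℕ := {i ∈ range L | i ∈ S ∧ (i + 1) % L ∉ S}

@[simp]
lemma mem_cycCorners {i : ℕ} : i ∈ cycCorners L S ↔ i < L ∧ i ∈ S ∧ (i + 1) % L ∉ S := by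
  simp [cycCorners]

lemma cycCorners_subset_range (L : ℕ) (S : Finset ℕ) : cycCorners L S ⊆ range L :=
  filter_subset _ _

lemma cycCorners_rotate (u : ℕ) :
    cycCorners L (rotate L u S) = rotate L u (cycCorners L S) := by
  ext j
  simp only [mem_cycCorners, mem_rotate, Nat.add_mod_mod, Nat.mod_add_mod, add_assoc]
  constructor
  · rintro ⟨hj, ⟨-, hS⟩, hnext⟩
    exact ⟨hj, Nat.mod_lt _ (by omega), hS, fun h => hnext ⟨Nat.mod_lt _ (by omega), h⟩⟩
  · rintro ⟨hj, -, hS, hnext⟩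
    exact ⟨hj, ⟨hj, hS⟩, fun h => hnext h.2⟩

lemma mem_corners {i : ℕ} : i ∈ corners m n S ↔ i + 1 < m + n ∧ i ∈ S ∧ i + 1 ∉ S := by
  simp only [corners, mem_filter, mem_range, Nat.lt_sub_iff_add_lt]

lemma corners_subset (m n : ℕ) (S : Finset ℕ) : corners m n S ⊆ S :=
  fun _ hi => (mem_corners.1 hi).2.1

lemma corners_subset_range (m n : ℕ) (S : Finset ℕ) : corners m n S ⊆ range (m + n) :=
  fun _ hi => mem_range.2 (by have := (mem_corners.1 hi).1; omega)

lemma last_notMem_corners (m n : ℕ) (S : Finset ℕ) : m + n - 1 ∉ corners m n S :=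
  fun h => by have := (mem_corners.1 h).1; omega

lemma cycCorners_eq_insert_corners (h0 : 0 ∉ S) (hlast : m + n - 1 ∈ S) :
    cycCorners (m + n) S = insert (m + n - 1) (corners m n S) := by
  have hL : 2 ≤ m + n := by
    by_contra h
    exact h0 (by rwa [show m + n - 1 = 0 by omega] at hlast)
  ext i
  simp only [mem_cycCorners, mem_insert, mem_corners]
  constructor
  · rintro ⟨hi, hiS, hnext⟩
    rcases Nat.lt_or_ge (i + 1) (m + n) with h | h
    · exact Or.inr ⟨h, hiS, by rwa [Nat.mod_eq_of_lt h] at hnext⟩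
    · exact Or.inl (by omega)
  · rintro (rfl | ⟨hi, hiS, hnext⟩)
    · exact ⟨by omega, hlast, by rwa [Nat.sub_add_cancel (by omega), Nat.mod_self]⟩
    · exact ⟨by omega, hiS, by rwa [Nat.mod_eq_of_lt hi]⟩

lemma card_corners_lt_card (hlast : m + n - 1 ∈ S) : #(corners m n S) < #S :=
  card_lt_card ((ssubset_iff_of_subset (corners_subset m n S)).2
    ⟨_, hlast, last_notMem_corners m n S⟩)

lemma card_corners_lt_card_compl (hL : 0 < m + n) (hS : S ⊆ range (m + n)) (h0 : 0 ∉ S) :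
    #(corners m n S) < m + n - #S := by
  have hsub : (corners m n S).image (· + 1) ⊂ range (m + n) \ S := by
    refine (ssubset_iff_of_subset fun j hj => ?_).2 ⟨0, mem_sdiff.2 ⟨mem_range.2 hL, h0⟩, by simp⟩
    obtain ⟨i, hi, rfl⟩ := mem_image.1 hj
    obtain ⟨hlt, -, hnext⟩ := mem_corners.1 hi
    exact mem_sdiff.2 ⟨mem_range.2 hlt, hnext⟩
  simpa [card_image_of_injective _ (add_left_injective 1), card_sdiff_of_subset hS]
    using card_lt_card hsub

lemma card_marked_eq_sum_choose (q : Finset ℕ → Prop) [DecidablePred q] (C : Finset ℕ → Finset ℕ)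
    (hC : ∀ S, C S ⊆ range L) (k : ℕ) :
    #{P ∈ (range L).powerset ×ˢ (range L).powerset | q P.1 ∧ P.2 ⊆ C P.1 ∧ #P.2 = k} =
      ∑ S ∈ (range L).powerset with q S, (#(C S)).choose k := by
  rw [card_eq_sum_card_fiberwise (f := Prod.fst) (t := {S ∈ (range L).powerset | q S})
    fun P hP => by
    simp only [mem_coe, mem_filter, mem_product] at hP ⊢
    exact ⟨hP.1.1, hP.2.1⟩]
  refine sum_congr rfl fun S hS => ?_
  rw [← card_powersetCard]
  refine card_nbij' Prod.snd (fun M => (S, M)) ?_ ?_ ?_ ?_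
  · intro P hP
    simp only [mem_coe, mem_filter] at hP
    obtain ⟨⟨-, -, hsub, hcard⟩, rfl⟩ := hP
    exact mem_powersetCard.2 ⟨hsub, hcard⟩
  · intro M hM
    simp only [mem_filter, mem_powerset] at hS
    simp only [mem_coe, mem_powersetCard] at hM
    simpa [hS.1, hS.2, hM.1, hM.2] using hM.1.trans (hC S)
  · intro P hP
    simp only [mem_coe, mem_filter] at hP
    simp [← hP.2]
  · intro M _
    rfl

def dyckPaths (m n : ℕ) : Finset (Finset ℕ) :=
  {S ∈ (range (m + n)).powerset | #S = m ∧ IsDyck m n S}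

def markedDyckPaths (m n k : ℕ) : Finset (Finset ℕ × Finset ℕ) :=
  {P ∈ (range (m + n)).powerset ×ˢ (range (m + n)).powerset |
    #P.1 = m ∧ IsDyck m n P.1 ∧ P.2 ⊆ corners m n P.1 ∧ #P.2 = k}

def cycMarkedDyckPaths (m n k : ℕ) : Finset (Finset ℕ × Finset ℕ) :=
  {P ∈ (range (m + n)).powerset ×ˢ (range (m + n)).powerset |
    #P.1 = m ∧ IsDyck m n P.1 ∧ P.2 ⊆ cycCorners (m + n) P.1 ∧ #P.2 = k}

lemma card_markedDyckPaths_eq_sum (m n k : ℕ) :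
    #(markedDyckPaths m n k) = ∑ S ∈ dyckPaths m n, (#(corners m n S)).choose k := by
  rw [dyckPaths, ← card_marked_eq_sum_choose _ _ (corners_subset_range m n), markedDyckPaths]
  simp only [and_assoc]

lemma card_cycMarkedDyckPaths_eq_sum (m n k : ℕ) :
    #(cycMarkedDyckPaths m n k) = ∑ S ∈ dyckPaths m n, (#(cycCorners (m + n) S)).choose k := by
  rw [dyckPaths, ← card_marked_eq_sum_choose _ _ (cycCorners_subset_range (m + n)),
    cycMarkedDyckPaths]
  simp only [and_assoc]

lemma card_cycMarkedDyckPaths (hm : 1 ≤ m) (hn : 1 ≤ n) (k : ℕ) :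
    #(cycMarkedDyckPaths m n (k + 1)) =
      #(markedDyckPaths m n k) + #(markedDyckPaths m n (k + 1)) := by
  rw [card_cycMarkedDyckPaths_eq_sum, card_markedDyckPaths_eq_sum,
    card_markedDyckPaths_eq_sum, ← sum_add_distrib]
  refine sum_congr rfl fun S hS => ?_
  obtain ⟨hS, hcard, hD⟩ := by simpa [dyckPaths] using hS
  rw [cycCorners_eq_insert_corners (zero_notMem_of_isDyck hn hD)
      (last_mem_of_isDyck hm hS hcard hD),
    card_insert_of_notMem (last_notMem_corners m n S), Nat.choose_succ_succ]

lemma card_sigma_cycMarkedDyckPaths (m n k : ℕ) :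
    #((cycMarkedDyckPaths m n k).sigma Prod.snd) = k * #(cycMarkedDyckPaths m n k) := by
  rw [card_sigma, sum_const_nat fun P hP => (mem_filter.1 hP).2.2.2.2, mul_comm]

lemma markedDyckPaths_eq_empty (hm : 1 ≤ m) (hn : 1 ≤ n) (hk : m ≤ k ∨ n ≤ k) :
    markedDyckPaths m n k = ∅ := by
  refine filter_eq_empty_iff.2 fun ⟨S, M⟩ hP ⟨hcard, hD, hM, hMcard⟩ => ?_
  have hS : S ⊆ range (m + n) := mem_powerset.1 (mem_product.1 hP).1
  have hle := card_le_card hM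
  have h1 := card_corners_lt_card (last_mem_of_isDyck hm hS hcard hD)
  have h2 := card_corners_lt_card_compl (by omega) hS (zero_notMem_of_isDyck hn hD)
  simp only at hle hMcard hcard
  omega

def markedNEPaths (m n k : ℕ) : Finset (Finset ℕ × Finset ℕ) :=
  {P ∈ (range (m + n)).powerset ×ˢ (range (m + n)).powerset |
    #P.1 = m ∧ 0 ∉ P.1 ∧ m + n - 1 ∈ P.1 ∧ P.2 ⊆ corners m n P.1 ∧ #P.2 = k}

lemma eq_of_rotate_eq_rotate (hco : Nat.Coprime m n) (hS : S ⊆ range (m + n))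
    (hT : T ⊆ range (m + n)) (hcard : #T = m) (hDS : IsDyck m n S) (hDT : IsDyck m n T)
    {u v : ℕ} (hu : u < m + n) (hv : v < m + n)
    (h : rotate (m + n) u S = rotate (m + n) v T) : u = v ∧ S = T := by
  have hL : 0 < m + n := by omega
  have hw : (u + (m + n - u)) % (m + n) = 0 := by
    rw [Nat.add_sub_cancel' hu.le, Nat.mod_self]
  have hST : S = rotate (m + n) ((v + (m + n - u)) % (m + n)) T := by
    rw [rotate_mod, ← rotate_rotate, ← h, rotate_rotate_of_mod_eq_zero hS hw]
  have hvu : (v + (m + n - u)) % (m + n) = 0 :=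
    eq_of_isDyck_rotate hco hT hcard (Nat.mod_lt _ hL) hL (hST ▸ hDS)
      (by rwa [rotate_zero hT])
  obtain rfl : u = v := (Nat.ModEq.add_right_cancel' _ (hw.trans hvu.symm)).eq_of_lt_of_lt hu hv
  exact ⟨rfl, (rotate_inj hS hT).1 h⟩

/-- Cut the cyclic word `x.1.1`, with marked cyclic corners `x.1.2`, just after the mark
`x.2`; that mark becomes the wrap-around corner and is dropped. -/
def cutAfter (L : ℕ) (x : Σ _ : Finset ℕ × Finset ℕ, ℕ) : Finset ℕ × Finset ℕ :=
  (rotate L (x.2 + 1) x.1.1, rotate L (x.2 + 1) (x.1.2.erase x.2))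

lemma cutAfter_mem_markedNEPaths {k : ℕ} {x : Σ _ : Finset ℕ × Finset ℕ, ℕ}
    (hx : x ∈ (cycMarkedDyckPaths m n (k + 1)).sigma Prod.snd) :
    cutAfter (m + n) x ∈ markedNEPaths m n k := by
  obtain ⟨⟨S, N⟩, e⟩ := x
  simp only [mem_sigma, cycMarkedDyckPaths, mem_filter, mem_product, mem_powerset] at hx
  obtain ⟨⟨⟨hS, -⟩, hcard, -, hN, hNcard⟩, he⟩ := hx
  obtain ⟨heL, heS, hnext⟩ := mem_cycCorners.1 (hN he)
  have hlast_eq : (e + 1 + (m + n - 1)) % (m + n) = e := by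
    rw [show e + 1 + (m + n - 1) = e + (m + n) by omega, Nat.add_mod_right,
      Nat.mod_eq_of_lt heL]
  have h0 : 0 ∉ rotate (m + n) (e + 1) S := fun h => hnext (mem_rotate.1 h).2
  have hlast : m + n - 1 ∈ rotate (m + n) (e + 1) S :=
    mem_rotate.2 ⟨by omega, by rwa [hlast_eq]⟩
  simp only [cutAfter, markedNEPaths, mem_filter, mem_product, mem_powerset]
  refine ⟨⟨rotate_subset_range _ _, rotate_subset_range _ _⟩, card_rotate hS _ ▸ hcard, h0,
    hlast, fun j hj => ?_, ?_⟩
  · have hj' : j ∈ cycCorners (m + n) (rotate (m + n) (e + 1) S) := by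
      rw [cycCorners_rotate]
      exact rotate_mono (e + 1) ((erase_subset e N).trans hN) hj
    rw [cycCorners_eq_insert_corners h0 hlast] at hj'
    refine (mem_insert.1 hj').resolve_left ?_
    rintro rfl
    simp [hlast_eq] at hj
  · rw [card_rotate ((erase_subset e N).trans (hN.trans (cycCorners_subset_range _ S))),
      card_erase_of_mem he, hNcard, Nat.add_sub_cancel]

lemma cutAfter_injOn (hco : Nat.Coprime m n) (k : ℕ) :
    Set.InjOn (cutAfter (m + n)) ((cycMarkedDyckPaths m n k).sigma Prod.snd : Set _) := by
  rintro ⟨⟨S₁, N₁⟩, e₁⟩ hx₁ ⟨⟨S₂, N₂⟩, e₂⟩ hx₂ h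
  simp only [mem_coe, mem_sigma, cycMarkedDyckPaths, mem_filter, mem_product,
    mem_powerset] at hx₁ hx₂
  obtain ⟨⟨⟨hS₁, -⟩, -, hD₁, hN₁, -⟩, he₁⟩ := hx₁
  obtain ⟨⟨⟨hS₂, -⟩, hcard₂, hD₂, hN₂, -⟩, he₂⟩ := hx₂
  have hL : 0 < m + n := by have := mem_range.1 (cycCorners_subset_range _ _ (hN₁ he₁)); omega
  obtain ⟨hS, hN⟩ := Prod.mk.inj h
  rw [← rotate_mod (e₁ + 1), ← rotate_mod (e₂ + 1)] at hS
  obtain ⟨he, rfl⟩ := eq_of_rotate_eq_rotate hco hS₁ hS₂ hcard₂ hD₁ hD₂ (Nat.mod_lt _ hL)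
    (Nat.mod_lt _ hL) hS
  obtain rfl : e₁ = e₂ := (Nat.ModEq.add_right_cancel' 1 he).eq_of_lt_of_lt
    (mem_range.1 (cycCorners_subset_range _ _ (hN₁ he₁)))
    (mem_range.1 (cycCorners_subset_range _ _ (hN₂ he₂)))
  have hrange : ∀ N ⊆ cycCorners (m + n) S₁, N.erase e₁ ⊆ range (m + n) :=
    fun N hN => (erase_subset _ _).trans (hN.trans (cycCorners_subset_range _ _))
  rw [rotate_inj (hrange N₁ hN₁) (hrange N₂ hN₂)] at hN
  rw [← insert_erase he₁, hN, insert_erase he₂]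

/-- The Dyck rotation of a path from `N` to `E`, marked at the image of its last step. -/
lemma exists_cutAfter_eq (hn : 1 ≤ n) {k : ℕ} {y : Finset ℕ × Finset ℕ}
    (hy : y ∈ markedNEPaths m n k) :
    ∃ x ∈ (cycMarkedDyckPaths m n (k + 1)).sigma Prod.snd, cutAfter (m + n) x = y := by
  obtain ⟨S', M'⟩ := y
  simp only [markedNEPaths, mem_filter, mem_product, mem_powerset] at hy
  obtain ⟨⟨hS', hM'⟩, hcard, h0, hlast, hM, hMcard⟩ := hy
  have hL : 0 < m + n := by omega
  obtain ⟨u, hu, hD⟩ := exists_isDyck_rotate hL hS' hcard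
  obtain ⟨e, he, hue⟩ := exists_add_mod_eq (show m + n - 1 < m + n by omega) u
  have hback : (u + (e + 1)) % (m + n) = 0 := by
    rw [← add_assoc, ← Nat.mod_add_mod, hue, Nat.sub_add_cancel hL, Nat.mod_self]
  have heM : e ∉ rotate (m + n) u M' := fun h =>
    last_notMem_corners m n S' (hM (by simpa [hue] using (mem_rotate.1 h).2))
  refine ⟨⟨(rotate (m + n) u S', insert e (rotate (m + n) u M')), e⟩, ?_, ?_⟩
  · simp only [mem_sigma, cycMarkedDyckPaths, mem_filter, mem_product, mem_powerset,
      mem_insert_self, and_true]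
    refine ⟨⟨rotate_subset_range _ _, insert_subset (mem_range.2 he) (rotate_subset_range _ _)⟩,
      card_rotate hS' u ▸ hcard, hD, ?_, ?_⟩
    · rw [cycCorners_rotate, cycCorners_eq_insert_corners h0 hlast]
      exact insert_subset (mem_rotate.2 ⟨he, by rw [hue]; exact mem_insert_self _ _⟩)
        (rotate_mono u (hM.trans (subset_insert _ _)))
    · rw [card_insert_of_notMem heM, card_rotate hM', hMcard]
  · simp only [cutAfter, erase_insert heM, rotate_rotate_of_mod_eq_zero hS' hback,
      rotate_rotate_of_mod_eq_zero hM' hback]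

theorem card_sigma_cycMarkedDyckPaths_eq_card_markedNEPaths (hn : 1 ≤ n)
    (hco : Nat.Coprime m n) (k : ℕ) :
    #((cycMarkedDyckPaths m n (k + 1)).sigma Prod.snd) = #(markedNEPaths m n k) :=
  card_nbij (cutAfter (m + n)) (fun _ hx => cutAfter_mem_markedNEPaths hx)
    (cutAfter_injOn hco (k + 1)) fun _ hy => exists_cutAfter_eq hn hy

/-- Placements of `k` disjoint dominoes `{p, p + 1}` in `[a, b)`, recorded by their left
cells. -/
def dominoSets (a b k : ℕ) : Finset (Finset ℕ) :=
  {D ∈ (Ico a b).powersetCard k | ∀ p ∈ D, p + 1 ∉ D ∧ p + 1 < b}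

lemma mem_dominoSets {a b k : ℕ} {D : Finset ℕ} :
    D ∈ dominoSets a b k ↔ #D = k ∧ ∀ p ∈ D, a ≤ p ∧ p + 1 ∉ D ∧ p + 1 < b := by
  simp only [dominoSets, mem_filter, mem_powersetCard, subset_iff, mem_Ico]
  constructor
  · rintro ⟨⟨hD, hk⟩, h⟩
    exact ⟨hk, fun p hp => ⟨(hD hp).1, h p hp⟩⟩
  · rintro ⟨hk, h⟩
    exact ⟨⟨fun p hp => ⟨(h p hp).1, by have := (h p hp).2.2; omega⟩, hk⟩,
      fun p hp => (h p hp).2⟩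

lemma dominoSets_eq_empty {a b k : ℕ} (h : b ≤ a + 1) : dominoSets a b (k + 1) = ∅ := by
  refine eq_empty_of_forall_notMem fun D hD => ?_
  obtain ⟨hk, hD⟩ := mem_dominoSets.1 hD
  obtain ⟨p, hp⟩ := card_pos.1 (show 0 < #D by omega)
  have := hD p hp
  omega

lemma filter_notMem_dominoSets (a N k : ℕ) :
    {D ∈ dominoSets a (a + N + 2) k | a + N ∉ D} = dominoSets a (a + N + 1) k := by
  ext D
  simp only [mem_filter, mem_dominoSets]
  constructor
  · rintro ⟨⟨hk, hD⟩, hN⟩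
    refine ⟨hk, fun p hp => ?_⟩
    obtain ⟨h1, h2, h3⟩ := hD p hp
    have : p ≠ a + N := fun h => hN (h ▸ hp)
    exact ⟨h1, h2, by omega⟩
  · rintro ⟨hk, hD⟩
    refine ⟨⟨hk, fun p hp => ?_⟩, fun hN => ?_⟩
    · obtain ⟨h1, h2, h3⟩ := hD p hp
      exact ⟨h1, h2, by omega⟩
    · have := (hD _ hN).2.2
      omega

lemma card_filter_mem_dominoSets (a N k : ℕ) :
    #{D ∈ dominoSets a (a + N + 2) (k + 1) | a + N ∈ D} = #(dominoSets a (a + N) k) := by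
  refine card_nbij' (·.erase (a + N)) (insert (a + N)) ?_ ?_ ?_ ?_
  · intro D hD
    simp only [mem_coe, mem_filter, mem_dominoSets] at hD ⊢
    obtain ⟨⟨hk, hD⟩, hN⟩ := hD
    refine ⟨by rw [card_erase_of_mem hN, hk, Nat.add_sub_cancel], fun p hp => ?_⟩
    obtain ⟨hpN, hp⟩ := mem_erase.1 hp
    have := hD p hp
    have : p + 1 ≠ a + N := fun h => (hD p hp).2.1 (h ▸ hN)
    have : p ≠ a + N + 1 := fun h => (hD _ hN).2.1 (h ▸ hp)
    exact ⟨by omega, fun h => (hD p hp).2.1 (mem_of_mem_erase h), by omega⟩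
  · intro D hD
    simp only [mem_coe, mem_filter, mem_dominoSets, mem_insert_self, and_true] at hD ⊢
    obtain ⟨hk, hD⟩ := hD
    have hN : a + N ∉ D := fun h => by have := hD _ h; omega
    refine ⟨by rw [card_insert_of_notMem hN, hk], fun p hp => ?_⟩
    rcases mem_insert.1 hp with rfl | hp
    · refine ⟨by omega, fun h => ?_, by omega⟩
      rcases mem_insert.1 h with h | h
      · omega
      · have := hD _ h; omega
    · have := hD p hp
      refine ⟨this.1, fun h => ?_, by omega⟩
      rcases mem_insert.1 h with h | h
      · omega
      · exact this.2.1 h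
  · intro D hD
    exact insert_erase (mem_filter.1 hD).2
  · intro D hD
    refine erase_insert fun h => ?_
    have := (mem_dominoSets.1 hD).2 _ h
    omega

lemma card_dominoSets (a : ℕ) : ∀ N k, #(dominoSets a (a + N) k) = (N - k).choose k
  | N, 0 => by
    rw [dominoSets, powersetCard_zero, filter_singleton, if_pos (by simp)]
    simp
  | 0, k + 1 | 1, k + 1 => by
    rw [dominoSets_eq_empty (by omega)]
    simp
  | N + 2, k + 1 => by
    rw [← card_filter_add_card_filter_not (fun D => a + N ∈ D), ← add_assoc,
      card_filter_mem_dominoSets, filter_notMem_dominoSets, add_assoc a N 1,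
      card_dominoSets a N k, card_dominoSets a (N + 1) (k + 1)]
    rcases le_or_gt k N with hk | hk
    · rw [show N + 2 - (k + 1) = N - k + 1 by omega, show N + 1 - (k + 1) = N - k by omega,
        Nat.choose_succ_succ', add_comm]
    · rw [show N + 2 - (k + 1) = 0 by omega, show N + 1 - (k + 1) = 0 by omega,
        show N - k = 0 by omega, Nat.choose_eq_zero_of_lt (by omega : 0 < k), zero_add]

lemma card_powersetCard_superset_disjoint {α : Type*} [DecidableEq α] {U I O : Finset α}
    (hI : I ⊆ U) (hO : O ⊆ U) (hIO : Disjoint I O) (b : ℕ) :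
    #{S ∈ U.powersetCard (#I + b) | I ⊆ S ∧ Disjoint S O} = (#U - #I - #O).choose b := by
  rw [Nat.sub_sub, ← card_union_of_disjoint hIO, ← card_sdiff_of_subset (union_subset hI hO),
    ← card_powersetCard]
  refine card_nbij' (· \ I) (· ∪ I) ?_ ?_ ?_ ?_
  · intro S hS
    simp only [mem_coe, mem_filter, mem_powersetCard] at hS ⊢
    obtain ⟨⟨hSU, hcard⟩, hIS, hSO⟩ := hS
    refine ⟨subset_sdiff.2 ⟨sdiff_subset.trans hSU, ?_⟩, ?_⟩
    · exact disjoint_union_right.2 ⟨sdiff_disjoint, disjoint_of_subset_left sdiff_subset hSO⟩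
    · rw [card_sdiff_of_subset hIS, hcard, Nat.add_sub_cancel_left]
  · intro T hT
    simp only [mem_coe, mem_filter, mem_powersetCard, subset_sdiff, disjoint_union_right] at hT ⊢
    obtain ⟨⟨hTU, hTI, hTO⟩, hcard⟩ := hT
    exact ⟨⟨union_subset hTU hI, by rw [card_union_of_disjoint hTI, hcard, add_comm]⟩,
      subset_union_right, disjoint_union_left.2 ⟨hTO, hIO⟩⟩
  · intro S hS
    exact sdiff_union_of_subset (mem_filter.1 hS).2.1
  · intro T hT
    simp only [mem_coe, mem_powersetCard, subset_sdiff, disjoint_union_right] at hT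
    exact union_sdiff_cancel_right hT.1.2.1

lemma subset_corners_iff {M : Finset ℕ} (hM : ∀ p ∈ M, p + 2 < m + n) :
    (0 ∉ S ∧ m + n - 1 ∈ S ∧ M ⊆ corners m n S) ↔
      (insert (m + n - 1) M ⊆ S ∧ Disjoint S (insert 0 (M.image (· + 1)))) := by
  rw [insert_subset_iff, disjoint_insert_right]
  constructor
  · rintro ⟨h0, hlast, hMc⟩
    refine ⟨⟨hlast, hMc.trans (corners_subset m n S)⟩, h0, disjoint_left.2 ?_⟩
    intro _ hS hq
    obtain ⟨p, hp, rfl⟩ := mem_image.1 hq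
    exact (mem_corners.1 (hMc hp)).2.2 hS
  · rintro ⟨⟨hlast, hMS⟩, h0, hnext⟩
    refine ⟨h0, hlast, fun p hp => mem_corners.2 ⟨by have := hM p hp; omega, hMS hp, ?_⟩⟩
    exact fun h => disjoint_left.1 hnext h (mem_image_of_mem _ hp)

lemma card_filter_snd_markedNEPaths_eq {k : ℕ} {M : Finset ℕ} (hMcard : #M = k)
    (hM : ∀ p ∈ M, p + 2 < m + n) :
    #{P ∈ markedNEPaths m n k | P.2 = M} = #{S ∈ (range (m + n)).powersetCard m |
      insert (m + n - 1) M ⊆ S ∧ Disjoint S (insert 0 (M.image (· + 1)))} := by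
  refine card_nbij' Prod.fst (·, M) ?_ ?_ ?_ ?_
  · rintro ⟨S, M'⟩ hP
    simp only [mem_coe, mem_filter, markedNEPaths, mem_product, mem_powerset] at hP
    obtain ⟨⟨⟨hS, -⟩, hcard, h0, hlast, hMc, -⟩, rfl⟩ := hP
    simp only [mem_coe, mem_filter, mem_powersetCard]
    exact ⟨⟨hS, hcard⟩, (subset_corners_iff hM).1 ⟨h0, hlast, hMc⟩⟩
  · intro S hS
    simp only [mem_coe, mem_filter, mem_powersetCard] at hS
    obtain ⟨⟨hS, hcard⟩, hIS, hSO⟩ := hS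
    obtain ⟨h0, hlast, hMc⟩ := (subset_corners_iff hM).2 ⟨hIS, hSO⟩
    simp only [mem_coe, mem_filter, markedNEPaths, mem_product, mem_powerset, and_true]
    exact ⟨⟨hS, fun p hp => mem_range.2 (by have := hM p hp; omega)⟩, hcard, h0, hlast, hMc,
      hMcard⟩
  · rintro ⟨S, M'⟩ hP
    simp only [mem_coe, mem_filter] at hP
    simp [hP.2]
  · intro S _
    rfl

lemma card_filter_snd_markedNEPaths {k : ℕ} (hkm : k + 1 ≤ m) (hn : 1 ≤ n) {M : Finset ℕ}
    (hM : M ∈ dominoSets 1 (1 + (m + n - 2)) k) :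
    #{P ∈ markedNEPaths m n k | P.2 = M} = (m + n - 2 * k - 2).choose (m - k - 1) := by
  obtain ⟨hMcard, hM⟩ := mem_dominoSets.1 hM
  rw [card_filter_snd_markedNEPaths_eq hMcard fun p hp => by have := (hM p hp).2.2; omega]
  set I := insert (m + n - 1) M
  set O := insert 0 (M.image (· + 1))
  have hIcard : #I = k + 1 := by
    rw [card_insert_of_notMem fun h => by have := hM _ h; omega, hMcard]
  have hOcard : #O = k + 1 := by
    rw [card_insert_of_notMem (by simp), card_image_of_injective _ (add_left_injective 1), hMcard]
  have hI : I ⊆ range (m + n) := insert_subset (mem_range.2 (by omega))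
    fun p hp => mem_range.2 (by have := hM p hp; omega)
  have hO : O ⊆ range (m + n) := insert_subset (mem_range.2 (by omega)) fun q hq => by
    obtain ⟨p, hp, rfl⟩ := mem_image.1 hq
    exact mem_range.2 (by have := hM p hp; omega)
  have hIO : Disjoint I O := disjoint_left.2 fun x hxI hxO => by
    rcases mem_insert.1 hxI with rfl | hxM <;> rcases mem_insert.1 hxO with h | h
    · omega
    · obtain ⟨p, hp, hpx⟩ := mem_image.1 h
      have := hM p hp
      omega
    · subst h
      have := hM 0 hxM
      omega
    · obtain ⟨p, hp, rfl⟩ := mem_image.1 h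
      exact (hM p hp).2.1 hxM
  have hfiber := card_powersetCard_superset_disjoint hI hO hIO (m - k - 1)
  rwa [card_range, hIcard, hOcard, show k + 1 + (m - k - 1) = m by omega,
    show m + n - (k + 1) - (k + 1) = m + n - 2 * k - 2 by omega] at hfiber

theorem card_markedNEPaths {k : ℕ} (hkm : k + 1 ≤ m) (hn : 1 ≤ n) :
    #(markedNEPaths m n k) =
      (m + n - k - 2).choose k * (m + n - 2 * k - 2).choose (m - k - 1) := by
  have hdom : Set.MapsTo Prod.snd (markedNEPaths m n k : Set (Finset ℕ × Finset ℕ))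
      (dominoSets 1 (1 + (m + n - 2)) k : Set (Finset ℕ)) := by
    rintro ⟨S, M⟩ hP
    simp only [mem_coe, markedNEPaths, mem_filter, mem_product, mem_powerset] at hP
    obtain ⟨-, -, h0, hlast, hMc, hMcard⟩ := hP
    refine mem_dominoSets.2 ⟨hMcard, fun p hp => ?_⟩
    obtain ⟨hlt, hpS, hnext⟩ := mem_corners.1 (hMc hp)
    have : p ≠ 0 := fun h => h0 (h ▸ hpS)
    have : p + 1 ≠ m + n - 1 := fun h => hnext (h ▸ hlast)
    exact ⟨by omega, fun h => hnext ((hMc.trans (corners_subset m n S)) h), by omega⟩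
  rw [card_eq_sum_card_fiberwise hdom,
    sum_const_nat fun M hM => card_filter_snd_markedNEPaths hkm hn hM, card_dominoSets,
    show m + n - 2 - k = m + n - k - 2 by omega]

theorem card_markedDyckPaths_recursion (hm : 1 ≤ m) (hn : 1 ≤ n) (hco : Nat.Coprime m n)
    {k : ℕ} (hkm : k + 1 ≤ m) :
    (k + 1) * (#(markedDyckPaths m n k) + #(markedDyckPaths m n (k + 1))) =
      (m + n - k - 2).choose k * (m + n - 2 * k - 2).choose (m - k - 1) := by
  rw [← card_cycMarkedDyckPaths hm hn, ← card_sigma_cycMarkedDyckPaths,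
    card_sigma_cycMarkedDyckPaths_eq_card_markedNEPaths hn hco, card_markedNEPaths hkm hn]

/-- The formula of the theorem, with an extra factor `(m - k) * (n - k)` cancelling
against `(m - k)! * (n - k)!`; in truncated subtraction it makes the formula vanish for
`k ≥ min m n`, like the number of marked Dyck paths. -/
noncomputable def markedDyckCount (m n k : ℕ) : ℚ :=
  (m + n - k - 1)! * (m - k : ℕ) * (n - k : ℕ) / (m * n * (m - k)! * (n - k)! * k !)

lemma markedDyckCount_eq_zero {k : ℕ} (hk : m ≤ k ∨ n ≤ k) : markedDyckCount m n k = 0 := by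
  rcases hk with hk | hk <;> simp [markedDyckCount, Nat.sub_eq_zero_of_le hk]

lemma markedDyckCount_of_lt {k : ℕ} (hkm : k < m) (hkn : k < n) :
    markedDyckCount m n k = (m + n - k - 1)! / (m * n * (n - k - 1)! * (m - k - 1)! * k !) := by
  obtain ⟨A, rfl⟩ : ∃ A, m = A + k + 1 := ⟨m - k - 1, by omega⟩
  obtain ⟨B, rfl⟩ : ∃ B, n = B + k + 1 := ⟨n - k - 1, by omega⟩
  simp only [markedDyckCount, show A + k + 1 - k = A + 1 by omega,
    show B + k + 1 - k = B + 1 by omega, Nat.factorial_succ]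
  push_cast
  field_simp

lemma markedDyckCount_add {k : ℕ} (hkm : k + 1 ≤ m) (hkn : k + 1 ≤ n) :
    (k + 1) * (markedDyckCount m n k + markedDyckCount m n (k + 1)) =
      (m + n - k - 2).choose k * (m + n - 2 * k - 2).choose (m - k - 1) := by
  obtain ⟨A, rfl⟩ : ∃ A, m = A + k + 1 := ⟨m - k - 1, by omega⟩
  obtain ⟨B, rfl⟩ : ∃ B, n = B + k + 1 := ⟨n - k - 1, by omega⟩
  simp only [markedDyckCount, show A + k + 1 + (B + k + 1) - k - 1 = A + B + k + 1 by omega,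
    show A + k + 1 + (B + k + 1) - (k + 1) - 1 = A + B + k by omega,
    show A + k + 1 + (B + k + 1) - k - 2 = A + B + k by omega,
    show A + k + 1 + (B + k + 1) - 2 * k - 2 = A + B by omega,
    show A + k + 1 - k = A + 1 by omega, show B + k + 1 - k = B + 1 by omega,
    show A + k + 1 - (k + 1) = A by omega, show B + k + 1 - (k + 1) = B by omega,
    add_tsub_cancel_right]
  rw [Nat.cast_choose ℚ (show k ≤ A + B + k by omega), Nat.cast_choose ℚ (show A ≤ A + B by omega),
    show A + B + k - k = A + B by omega, show A + B - A = B by omega]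
  simp only [Nat.factorial_succ]
  push_cast
  field_simp
  ring

theorem card_markedDyckPaths_eq (hm : 1 ≤ m) (hn : 1 ≤ n) (hco : Nat.Coprime m n) (k : ℕ) :
    (#(markedDyckPaths m n k) : ℚ) = markedDyckCount m n k := by
  obtain ⟨d, hd⟩ : ∃ d, min m n - k = d := ⟨_, rfl⟩
  induction d generalizing k with
  | zero =>
    have hk : m ≤ k ∨ n ≤ k := by omega
    rw [markedDyckPaths_eq_empty hm hn hk, markedDyckCount_eq_zero hk, card_empty, Nat.cast_zero]
  | succ d ih =>
    have hrec : ((k : ℚ) + 1) * (#(markedDyckPaths m n k) + #(markedDyckPaths m n (k + 1))) =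
        (k + 1) * (markedDyckCount m n k + markedDyckCount m n (k + 1)) := by
      rw [markedDyckCount_add (by omega) (by omega)]
      exact_mod_cast card_markedDyckPaths_recursion hm hn hco (by omega)
    rw [ih (k + 1) (by omega)] at hrec
    linarith [mul_left_cancel₀ (by positivity : (k : ℚ) + 1 ≠ 0) hrec]

end MarkedDyckPath

/-- For coprime `m, n ≥ 1` and `k ≤ n-1`, `k ≤ m-1`, the number of marked Dyck paths
in the `m × n` rectangle with `k` marks — pairs `(π, M)` of a Dyck path `π` and a
`k`-element subset `M` of its external corners — equals
`(m+n-k-1)! / (m · n · (n-k-1)! (m-k-1)! k!)`. -/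
theorem card_marked_dyck_paths (m n k : ℕ) (hm : 1 ≤ m) (hn : 1 ≤ n)
    (hco : Nat.Coprime m n) (hkn : k ≤ n - 1) (hkm : k ≤ m - 1) :
    (((((Finset.range (m + n)).powerset ×ˢ (Finset.range (m + n)).powerset).filter
        fun P => P.1.card = m ∧ IsDyck m n P.1 ∧ P.2 ⊆ corners m n P.1 ∧
          P.2.card = k).card : ℚ)) =
      (Nat.factorial (m + n - k - 1) : ℚ) /
        ((m : ℚ) * (n : ℚ) * (Nat.factorial (n - k - 1) : ℚ) *
          (Nat.factorial (m - k - 1) : ℚ) * (Nat.factorial k : ℚ)) := by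
  rw [← MarkedDyckPath.markedDyckCount_of_lt (by omega) (by omega)]
  exact MarkedDyckPath.card_markedDyckPaths_eq hm hn hco k
end
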